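/- arXiv:2107.09473 — 9 statements merged into one kernel-verified Lean document; each statement's English description precedes it below -/
import Mathlib

section
/- Let b₁, b₂ ∈ ℝ and let τ₁, τ₂ be finite signed Borel measures on ℝ. If b₁ + ∫_ℝ (1+xz)/(z−x) dτ₁(x) = b₂ + ∫_ℝ (1+xz)/(z−x) dτ₂(x) for every z in the upper half-plane ℂ⁺ = {z ∈ ℂ : Im z > 0}, then b₁ = b₂ and τ₁ = τ₂. -/
open MeasureTheory Complex Filter Topology
open scoped NNReal ENNReal

namespace FreeUniq

lemma sub_ne' {z : ℂ} (hz : z.im ≠ 0) (x : ℝ) : z - (x : ℂ) ≠ 0 := by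
  intro h; apply hz; have := congrArg Complex.im h; simpa using this

lemma norm_res_le {z : ℂ} (hz : z.im ≠ 0) (x : ℝ) : ‖(z - (x : ℂ))⁻¹‖ ≤ |z.im|⁻¹ := by
  rw [norm_inv]
  apply inv_anti₀ (abs_pos.mpr hz)
  calc |z.im| = |(z - (x:ℂ)).im| := by simp
    _ ≤ ‖z - (x:ℂ)‖ := by exact Complex.abs_im_le_norm _

lemma cont_res {z : ℂ} (hz : z.im ≠ 0) : Continuous (fun x : ℝ => (z - (x:ℂ))⁻¹) :=
  ((continuous_const.sub Complex.continuous_ofReal).inv₀ (fun x => sub_ne' hz x))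

lemma integrable_of_bound (ρ : Measure ℝ) [IsFiniteMeasure ρ] (f : ℝ → ℂ) (hf : Continuous f)
    (C : ℝ) (hC : ∀ x, ‖f x‖ ≤ C) : Integrable f ρ :=
  (integrable_const C).mono' hf.aestronglyMeasurable (ae_of_all _ hC)

lemma int_res (ρ : Measure ℝ) [IsFiniteMeasure ρ] {z : ℂ} (hz : z.im ≠ 0) :
    Integrable (fun x : ℝ => (z - (x:ℂ))⁻¹) ρ :=
  integrable_of_bound ρ _ (cont_res hz) _ (norm_res_le hz)

lemma fz_eq {z : ℂ} (hz : z.im ≠ 0) (x : ℝ) :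
    (1 + (x:ℂ) * z) / (z - x) = (1 + z^2) * (z - (x:ℂ))⁻¹ - z := by
  have h := sub_ne' hz x
  field_simp
  ring

lemma int_fz (ρ : Measure ℝ) [IsFiniteMeasure ρ] {z : ℂ} (hz : z.im ≠ 0) :
    Integrable (fun x : ℝ => (1 + (x:ℂ) * z) / (z - x)) ρ := by
  have : (fun x : ℝ => (1 + (x:ℂ) * z) / (z - x))
      = fun x : ℝ => (1 + z^2) * (z - (x:ℂ))⁻¹ - z := funext (fz_eq hz)
  rw [this]
  exact ((int_res ρ hz).const_mul _).sub (integrable_const z)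

lemma norm_aux {z : ℂ} (hz : z.im ≠ 0) (c : ℂ) (x : ℝ) :
    ‖(c - (x:ℂ)) * (z - (x:ℂ))⁻¹‖ ≤ 1 + ‖c - z‖ * |z.im|⁻¹ := by
  have h := sub_ne' hz x
  have key : (c - (x:ℂ)) * (z - (x:ℂ))⁻¹ = (c - z) * (z - (x:ℂ))⁻¹ + 1 := by field_simp; ring
  rw [key]
  calc ‖(c - z) * (z - (x:ℂ))⁻¹ + 1‖ ≤ ‖(c - z) * (z - (x:ℂ))⁻¹‖ + ‖(1:ℂ)‖ := norm_add_le _ _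
    _ ≤ ‖c - z‖ * |z.im|⁻¹ + 1 := by
        rw [norm_mul, norm_one]
        exact add_le_add_left (mul_le_mul_of_nonneg_left (norm_res_le hz x) (norm_nonneg _)) 1
    _ = 1 + ‖c - z‖ * |z.im|⁻¹ := by ring

lemma one_add_sq (x : ℝ) : (1 + (x:ℂ)^2) = (I - x) * (-I - x) := by
  ring_nf
  rw [Complex.I_sq]
  ring

lemma norm2_le {z w : ℂ} (hz : z.im ≠ 0) (hw : w.im ≠ 0) (x : ℝ) :
    ‖(1 + (x:ℂ)^2) * ((z - (x:ℂ))⁻¹ * (w - (x:ℂ))⁻¹)‖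
      ≤ (1 + ‖I - z‖ * |z.im|⁻¹) * (1 + ‖-I - w‖ * |w.im|⁻¹) := by
  have key : (1 + (x:ℂ)^2) * ((z - (x:ℂ))⁻¹ * (w - (x:ℂ))⁻¹)
      = ((I - (x:ℂ)) * (z - (x:ℂ))⁻¹) * ((-I - (x:ℂ)) * (w - (x:ℂ))⁻¹) := by
    rw [one_add_sq]; ring
  rw [key, norm_mul]
  have n1 : (0:ℝ) ≤ 1 + ‖I - z‖ * |z.im|⁻¹ := by positivity
  exact mul_le_mul (norm_aux hz I x) (norm_aux hw (-I) x) (norm_nonneg _) n1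

lemma int2 (ρ : Measure ℝ) [IsFiniteMeasure ρ] {z w : ℂ} (hz : z.im ≠ 0) (hw : w.im ≠ 0) :
    Integrable (fun x : ℝ => (1 + (x:ℂ)^2) * ((z - (x:ℂ))⁻¹ * (w - (x:ℂ))⁻¹)) ρ := by
  apply integrable_of_bound ρ _ ?_ _ (fun x => norm2_le hz hw x)
  have : Continuous (fun x : ℝ => (1 + (x:ℂ)^2)) := by continuity
  exact this.mul ((cont_res hz).mul (cont_res hw))

lemma norm3_le {z w u : ℂ} (hz : z.im ≠ 0) (hw : w.im ≠ 0) (hu : u.im ≠ 0) (x : ℝ) :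
    ‖(1 + (x:ℂ)^2) * ((z - (x:ℂ))⁻¹ * ((w - (x:ℂ))⁻¹ * (u - (x:ℂ))⁻¹))‖
      ≤ (1 + ‖I - z‖ * |z.im|⁻¹) * (1 + ‖-I - w‖ * |w.im|⁻¹) * |u.im|⁻¹ := by
  have key : (1 + (x:ℂ)^2) * ((z - (x:ℂ))⁻¹ * ((w - (x:ℂ))⁻¹ * (u - (x:ℂ))⁻¹))
      = ((1 + (x:ℂ)^2) * ((z - (x:ℂ))⁻¹ * (w - (x:ℂ))⁻¹)) * (u - (x:ℂ))⁻¹ := by ring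
  rw [key, norm_mul]
  have n1 : (0:ℝ) ≤ (1 + ‖I - z‖ * |z.im|⁻¹) * (1 + ‖-I - w‖ * |w.im|⁻¹) := by positivity
  exact mul_le_mul (norm2_le hz hw x) (norm_res_le hu x) (norm_nonneg _) n1

lemma int3 (ρ : Measure ℝ) [IsFiniteMeasure ρ] {z w u : ℂ}
    (hz : z.im ≠ 0) (hw : w.im ≠ 0) (hu : u.im ≠ 0) :
    Integrable (fun x : ℝ =>
      (1 + (x:ℂ)^2) * ((z - (x:ℂ))⁻¹ * ((w - (x:ℂ))⁻¹ * (u - (x:ℂ))⁻¹))) ρ := by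
  apply integrable_of_bound ρ _ ?_ _ (fun x => norm3_le hz hw hu x)
  have : Continuous (fun x : ℝ => (1 + (x:ℂ)^2)) := by continuity
  exact this.mul ((cont_res hz).mul ((cont_res hw).mul (cont_res hu)))

lemma P1 {z w : ℂ} (hz : z.im ≠ 0) (hw : w.im ≠ 0) (x : ℝ) :
    (1 + (x:ℂ) * z) / (z - x) - (1 + (x:ℂ) * w) / (w - x)
      = (w - z) * ((1 + (x:ℂ)^2) * ((z - (x:ℂ))⁻¹ * (w - (x:ℂ))⁻¹)) := by
  have h1 := sub_ne' hz x
  have h2 := sub_ne' hw x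
  field_simp
  ring

lemma P2 {z w u : ℂ} (hz : z.im ≠ 0) (hw : w.im ≠ 0) (hu : u.im ≠ 0) (x : ℝ) :
    (1 + (x:ℂ)^2) * ((z - (x:ℂ))⁻¹ * (w - (x:ℂ))⁻¹)
      - (1 + (x:ℂ)^2) * ((z - (x:ℂ))⁻¹ * (u - (x:ℂ))⁻¹)
      = (u - w) * ((1 + (x:ℂ)^2) * ((z - (x:ℂ))⁻¹ * ((w - (x:ℂ))⁻¹ * (u - (x:ℂ))⁻¹))) := by
  have h1 := sub_ne' hz x
  have h2 := sub_ne' hw x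
  have h3 := sub_ne' hu x
  field_simp
  ring

lemma P3 {z : ℂ} (hz : z.im ≠ 0) (x : ℝ) :
    (1 + (x:ℂ)^2) * ((z - (x:ℂ))⁻¹ * ((I - (x:ℂ))⁻¹ * (-I - (x:ℂ))⁻¹))
      = (z - (x:ℂ))⁻¹ := by
  have h1 := sub_ne' hz x
  have h2 : (I:ℂ) - x ≠ 0 := sub_ne' (by simp) x
  have h3 : (-I:ℂ) - x ≠ 0 := sub_ne' (by simp) x
  have key : (1 + (x:ℂ)^2) = (I - x) * (-I - x) := one_add_sq x
  rw [key]
  field_simp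

/-- From the hypothesis that the difference of the two representations is the constant `c`
on nonreal points, deduce equality of Cauchy transforms, equal masses, and `c = 0`. -/
theorem key_derivation (μ ν : Measure ℝ) [IsFiniteMeasure μ] [IsFiniteMeasure ν] (c : ℂ)
    (hE : ∀ z : ℂ, z.im ≠ 0 →
      (∫ x, (1 + (x:ℂ) * z) / (z - x) ∂μ) - (∫ x, (1 + (x:ℂ) * z) / (z - x) ∂ν) = c) :
    (∀ z : ℂ, z.im ≠ 0 → z ≠ I → z ≠ -I →
        ∫ x, (z - (x:ℂ))⁻¹ ∂μ = ∫ x, (z - (x:ℂ))⁻¹ ∂ν)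
      ∧ μ Set.univ = ν Set.univ ∧ c = 0 := by
  -- step 1 : two-factor integrals agree
  have hQ1 : ∀ z w : ℂ, z.im ≠ 0 → w.im ≠ 0 → z ≠ w →
      ∫ x, (1 + (x:ℂ)^2) * ((z - (x:ℂ))⁻¹ * (w - (x:ℂ))⁻¹) ∂μ
        = ∫ x, (1 + (x:ℂ)^2) * ((z - (x:ℂ))⁻¹ * (w - (x:ℂ))⁻¹) ∂ν := by
    intro z w hz hw hzw
    have hdiff : ∀ (ρ : Measure ℝ) [IsFiniteMeasure ρ],
        (∫ x, (1 + (x:ℂ) * z) / (z - x) ∂ρ) - (∫ x, (1 + (x:ℂ) * w) / (w - x) ∂ρ)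
          = (w - z) * ∫ x, (1 + (x:ℂ)^2) * ((z - (x:ℂ))⁻¹ * (w - (x:ℂ))⁻¹) ∂ρ := by
      intro ρ _
      rw [← integral_sub (int_fz ρ hz) (int_fz ρ hw), ← integral_const_mul]
      exact integral_congr_ae (ae_of_all _ (fun x => P1 hz hw x))
    have h1 := hE z hz
    have h2 := hE w hw
    have key : (w - z) * (∫ x, (1 + (x:ℂ)^2) * ((z - (x:ℂ))⁻¹ * (w - (x:ℂ))⁻¹) ∂μ)
        = (w - z) * (∫ x, (1 + (x:ℂ)^2) * ((z - (x:ℂ))⁻¹ * (w - (x:ℂ))⁻¹) ∂ν) := by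
      rw [← hdiff μ, ← hdiff ν]
      linear_combination h1 - h2
    exact mul_left_cancel₀ (sub_ne_zero.mpr (Ne.symm hzw)) key
  -- step 2 : three-factor integrals agree
  have hQ2 : ∀ z w u : ℂ, z.im ≠ 0 → w.im ≠ 0 → u.im ≠ 0 → z ≠ w → z ≠ u → w ≠ u →
      ∫ x, (1 + (x:ℂ)^2) * ((z - (x:ℂ))⁻¹ * ((w - (x:ℂ))⁻¹ * (u - (x:ℂ))⁻¹)) ∂μ
        = ∫ x, (1 + (x:ℂ)^2) * ((z - (x:ℂ))⁻¹ * ((w - (x:ℂ))⁻¹ * (u - (x:ℂ))⁻¹)) ∂ν := by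
    intro z w u hz hw hu hzw hzu hwu
    have hdiff : ∀ (ρ : Measure ℝ) [IsFiniteMeasure ρ],
        (∫ x, (1 + (x:ℂ)^2) * ((z - (x:ℂ))⁻¹ * (w - (x:ℂ))⁻¹) ∂ρ)
          - (∫ x, (1 + (x:ℂ)^2) * ((z - (x:ℂ))⁻¹ * (u - (x:ℂ))⁻¹) ∂ρ)
          = (u - w) * ∫ x, (1 + (x:ℂ)^2)
              * ((z - (x:ℂ))⁻¹ * ((w - (x:ℂ))⁻¹ * (u - (x:ℂ))⁻¹)) ∂ρ := by
      intro ρ _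
      rw [← integral_sub (int2 ρ hz hw) (int2 ρ hz hu), ← integral_const_mul]
      exact integral_congr_ae (ae_of_all _ (fun x => P2 hz hw hu x))
    have h1 := hQ1 z w hz hw hzw
    have h2 := hQ1 z u hz hu hzu
    have key : (u - w) * (∫ x, (1 + (x:ℂ)^2)
          * ((z - (x:ℂ))⁻¹ * ((w - (x:ℂ))⁻¹ * (u - (x:ℂ))⁻¹)) ∂μ)
        = (u - w) * (∫ x, (1 + (x:ℂ)^2)
          * ((z - (x:ℂ))⁻¹ * ((w - (x:ℂ))⁻¹ * (u - (x:ℂ))⁻¹)) ∂ν) := by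
      rw [← hdiff μ, ← hdiff ν]
      linear_combination h1 - h2
    exact mul_left_cancel₀ (sub_ne_zero.mpr (Ne.symm hwu)) key
  -- step 3 : Cauchy transforms agree away from ±I
  have hG : ∀ z : ℂ, z.im ≠ 0 → z ≠ I → z ≠ -I →
      ∫ x, (z - (x:ℂ))⁻¹ ∂μ = ∫ x, (z - (x:ℂ))⁻¹ ∂ν := by
    intro z hz hzI hzmI
    have hI : (I:ℂ).im ≠ 0 := by simp
    have hmI : (-I:ℂ).im ≠ 0 := by simp
    have hImI : (I:ℂ) ≠ -I := by
      intro h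
      have := congrArg Complex.im h
      simp at this
      norm_num at this
    have key := hQ2 z I (-I) hz hI hmI hzI hzmI hImI
    have hrw : ∀ (ρ : Measure ℝ),
        ∫ x, (1 + (x:ℂ)^2) * ((z - (x:ℂ))⁻¹ * ((I - (x:ℂ))⁻¹ * (-I - (x:ℂ))⁻¹)) ∂ρ
          = ∫ x, (z - (x:ℂ))⁻¹ ∂ρ := fun ρ =>
      integral_congr_ae (ae_of_all _ (fun x => P3 hz x))
    rwa [hrw μ, hrw ν] at key
  refine ⟨hG, ?_⟩
  -- masses and the constant
  have hint : ∀ (ρ : Measure ℝ) [IsFiniteMeasure ρ], ∀ z : ℂ, z.im ≠ 0 →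
      ∫ x, (1 + (x:ℂ) * z) / (z - x) ∂ρ
        = (1 + z^2) * (∫ x, (z - (x:ℂ))⁻¹ ∂ρ) - ((ρ Set.univ).toReal : ℂ) * z := by
    intro ρ _ z hz
    have h1 : (fun x : ℝ => (1 + (x:ℂ) * z) / (z - x))
        = fun x : ℝ => (1 + z^2) * (z - (x:ℂ))⁻¹ - z := funext (fz_eq hz)
    rw [h1, integral_sub ((int_res ρ hz).const_mul _) (integrable_const z),
      integral_const_mul, integral_const]
    simp [smul_eq_mul, measureReal_def]
  have him2 : (2*I : ℂ).im ≠ 0 := by simp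
  have him3 : (3*I : ℂ).im ≠ 0 := by simp
  have h2I1 : (2*I:ℂ) ≠ I := by
    intro h; apply_fun Complex.im at h; simp at h
  have h2I2 : (2*I:ℂ) ≠ -I := by
    intro h; apply_fun Complex.im at h; simp at h; norm_num at h
  have h3I1 : (3*I:ℂ) ≠ I := by
    intro h; apply_fun Complex.im at h; simp at h
  have h3I2 : (3*I:ℂ) ≠ -I := by
    intro h; apply_fun Complex.im at h; simp at h; norm_num at h
  have e2 := hE (2*I) him2
  have e3 := hE (3*I) him3
  rw [hint μ (2*I) him2, hint ν (2*I) him2, hG (2*I) him2 h2I1 h2I2] at e2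
  rw [hint μ (3*I) him3, hint ν (3*I) him3, hG (3*I) him3 h3I1 h3I2] at e3
  set M : ℂ := ((μ Set.univ).toReal : ℂ) with hM
  set N : ℂ := ((ν Set.univ).toReal : ℂ) with hN
  have eMN : M = N := by
    have h0 : I * (N - M) = 0 := by linear_combination e3 - e2
    rcases mul_eq_zero.mp h0 with h | h
    · exact absurd h I_ne_zero
    · exact (sub_eq_zero.mp h).symm
  have hc : c = 0 := by
    have hcc : c = (N - M) * (2*I) := by linear_combination -e2
    rw [eMN] at hcc
    simpa using hcc
  refine ⟨?_, hc⟩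
  have htr : (μ Set.univ).toReal = (ν Set.univ).toReal := by
    have := eMN
    rw [hM, hN] at this
    exact_mod_cast this
  exact (ENNReal.toReal_eq_toReal_iff' (measure_ne_top μ _) (measure_ne_top ν _)).mp htr

/-! ### The Stone–Weierstrass argument on the one-point compactification -/

section SW

open OnePoint Metric

/-- The resolvent function extended to the one-point compactification of `ℝ`. -/
noncomputable def Rmap (z : ℂ) (hz : z.im ≠ 0) : C(OnePoint ℝ, ℂ) :=
  OnePoint.continuousMapMk ⟨fun x : ℝ => (z - (x:ℂ))⁻¹, cont_res hz⟩ 0 (by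
    rw [Filter.coclosedCompact_eq_cocompact, tendsto_zero_iff_norm_tendsto_zero]
    have h1 : Tendsto (fun x : ℝ => ‖x‖ - ‖z‖) (cocompact ℝ) atTop :=
      (tendsto_norm_cocompact_atTop).atTop_add tendsto_const_nhds
    have h2 : Tendsto (fun x : ℝ => ‖z - (x:ℂ)‖) (cocompact ℝ) atTop := by
      apply tendsto_atTop_mono ?_ h1
      intro x
      calc ‖x‖ - ‖z‖ = ‖(x:ℂ)‖ - ‖z‖ := by rw [Complex.norm_real]
        _ ≤ ‖(x:ℂ) - z‖ := norm_sub_norm_le _ _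
        _ = ‖z - (x:ℂ)‖ := norm_sub_rev _ _
    have h3 := h2.inv_tendsto_atTop
    simpa [Function.comp, norm_inv, Pi.inv_def] using h3)

lemma Rmap_coe {z : ℂ} (hz : z.im ≠ 0) (x : ℝ) :
    Rmap z hz (x : OnePoint ℝ) = (z - (x:ℂ))⁻¹ := rfl

lemma Rmap_infty {z : ℂ} (hz : z.im ≠ 0) : Rmap z hz ∞ = 0 := rfl

lemma norm_Rmap_le {z : ℂ} (hz : z.im ≠ 0) : ‖Rmap z hz‖ ≤ |z.im|⁻¹ := by
  rw [ContinuousMap.norm_le _ (by positivity)]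
  intro p
  induction p using OnePoint.rec with
  | infty => simp [Rmap_infty hz]
  | coe x => rw [Rmap_coe hz x]; exact norm_res_le hz x

lemma Rmap_mul {z w : ℂ} (hz : z.im ≠ 0) (hw : w.im ≠ 0) (hzw : z ≠ w) :
    Rmap z hz * Rmap w hw = (w - z)⁻¹ • (Rmap z hz - Rmap w hw) := by
  ext p
  induction p using OnePoint.rec with
  | infty => simp [Rmap_infty hz, Rmap_infty hw]
  | coe x =>
    have h1 := sub_ne' hz x
    have h2 := sub_ne' hw x
    have h3 : w - z ≠ 0 := sub_ne_zero.mpr (Ne.symm hzw)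
    simp only [ContinuousMap.mul_apply, ContinuousMap.smul_apply, ContinuousMap.sub_apply,
      Rmap_coe, smul_eq_mul]
    field_simp
    ring

lemma norm_Rmap_sub_le {z w : ℂ} (hz : z.im ≠ 0) (hw : w.im ≠ 0) :
    ‖Rmap w hw - Rmap z hz‖ ≤ ‖z - w‖ * (|z.im|⁻¹ * |w.im|⁻¹) := by
  rw [ContinuousMap.norm_le _ (by positivity)]
  intro p
  induction p using OnePoint.rec with
  | infty => simp [Rmap_infty hz, Rmap_infty hw]; positivity
  | coe x =>
    have h1 := sub_ne' hz x
    have h2 := sub_ne' hw x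
    have key : (w - (x:ℂ))⁻¹ - (z - (x:ℂ))⁻¹ = (z - w) * ((z - (x:ℂ))⁻¹ * (w - (x:ℂ))⁻¹) := by
      rw [inv_sub_inv h2 h1]
      rw [div_eq_mul_inv, mul_inv]
      ring_nf
    simp only [ContinuousMap.sub_apply, Rmap_coe]
    rw [key, norm_mul, norm_mul]
    have h4 : (0:ℝ) ≤ ‖z - w‖ := norm_nonneg _
    exact mul_le_mul_of_nonneg_left
      (mul_le_mul (norm_res_le hz x) (norm_res_le hw x) (norm_nonneg _) (by positivity)) h4

lemma star_Rmap {z : ℂ} (hz : z.im ≠ 0) :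
    star (Rmap z hz) = Rmap (starRingEnd ℂ z) (by simpa using hz) := by
  ext p
  induction p using OnePoint.rec with
  | infty => simp [Rmap_infty]
  | coe x =>
    simp only [ContinuousMap.star_apply, Rmap_coe]
    rw [RCLike.star_def, map_inv₀, map_sub, Complex.conj_ofReal]

/-- Every continuous function on the one-point compactification integrates equally against
two finite measures with equal mass and equal Cauchy transforms. -/
theorem integral_eq_of_res (μ ν : Measure ℝ) [IsFiniteMeasure μ] [IsFiniteMeasure ν]
    (hmass : μ Set.univ = ν Set.univ)
    (hG : ∀ z : ℂ, z.im ≠ 0 → z ≠ I → z ≠ -I →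
      ∫ x, (z - (x:ℂ))⁻¹ ∂μ = ∫ x, (z - (x:ℂ))⁻¹ ∂ν) :
    ∀ f : C(OnePoint ℝ, ℂ), (∫ x : ℝ, f x ∂μ) = ∫ x : ℝ, f x ∂ν := by
  classical
  set Sgen : Set C(OnePoint ℝ, ℂ) :=
    {f | ∃ z : ℂ, ∃ hz : z.im ≠ 0, z ≠ I ∧ z ≠ -I ∧ f = Rmap z hz} with hSgen
  set S : Set C(OnePoint ℝ, ℂ) := insert 1 Sgen with hS
  set V : Submodule ℂ C(OnePoint ℝ, ℂ) := Submodule.span ℂ S with hV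
  set W : Submodule ℂ C(OnePoint ℝ, ℂ) := V.topologicalClosure with hW
  have hVW : (V : Set C(OnePoint ℝ, ℂ)) ⊆ (W : Set C(OnePoint ℝ, ℂ)) := by
    rw [hW, Submodule.topologicalClosure_coe]
    exact subset_closure
  have hWclosed : IsClosed (W : Set C(OnePoint ℝ, ℂ)) := Submodule.isClosed_topologicalClosure V
  have hWclosure : (W : Set C(OnePoint ℝ, ℂ)) = closure (V : Set C(OnePoint ℝ, ℂ)) :=
    Submodule.topologicalClosure_coe V
  have hSV : S ⊆ (V : Set C(OnePoint ℝ, ℂ)) := Submodule.subset_span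
  -- squares of resolvents lie in W
  have hsquare : ∀ (z : ℂ) (hz : z.im ≠ 0), z ≠ I → z ≠ -I →
      Rmap z hz * Rmap z hz ∈ W := by
    intro z hz hzI hzmI
    have him : ∀ n : ℕ, (z + ((1/(n+1) : ℝ) : ℂ)).im ≠ 0 := by
      intro n; simpa using hz
    set g : ℕ → C(OnePoint ℝ, ℂ) :=
      fun n => Rmap z hz * Rmap (z + ((1/(n+1) : ℝ) : ℂ)) (him n) with hg
    have hnorm : ∀ n : ℕ, ‖g n - Rmap z hz * Rmap z hz‖
        ≤ |z.im|⁻¹ * ((1/(n+1) : ℝ) * (|z.im|⁻¹ * |z.im|⁻¹)) := by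
      intro n
      have h1 : g n - Rmap z hz * Rmap z hz
          = Rmap z hz * (Rmap (z + ((1/(n+1) : ℝ) : ℂ)) (him n) - Rmap z hz) := by
        rw [hg, mul_sub]
      rw [h1]
      calc ‖Rmap z hz * (Rmap (z + ((1/(n+1) : ℝ) : ℂ)) (him n) - Rmap z hz)‖
          ≤ ‖Rmap z hz‖ * ‖Rmap (z + ((1/(n+1) : ℝ) : ℂ)) (him n) - Rmap z hz‖ :=
            norm_mul_le _ _
        _ ≤ |z.im|⁻¹ * ((1/(n+1) : ℝ) * (|z.im|⁻¹ * |z.im|⁻¹)) := by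
            apply mul_le_mul (norm_Rmap_le hz) ?_ (norm_nonneg _) (by positivity)
            have h2 := norm_Rmap_sub_le hz (him n)
            have h3 : ‖z - (z + ((1/(n+1) : ℝ) : ℂ))‖ = (1/(n+1) : ℝ) := by
              have : z - (z + ((1/(n+1) : ℝ) : ℂ)) = -((1/(n+1) : ℝ) : ℂ) := by ring
              rw [this, norm_neg, Complex.norm_real, Real.norm_eq_abs, abs_of_pos]
              positivity
            calc ‖Rmap (z + ((1/(n+1) : ℝ) : ℂ)) (him n) - Rmap z hz‖
                ≤ ‖z - (z + ((1/(n+1) : ℝ) : ℂ))‖ * (|z.im|⁻¹ * |(z + ((1/(n+1) : ℝ) : ℂ)).im|⁻¹) := h2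
              _ = (1/(n+1) : ℝ) * (|z.im|⁻¹ * |z.im|⁻¹) := by
                  rw [h3]; congr 2; simp
    have htend : Tendsto g atTop (𝓝 (Rmap z hz * Rmap z hz)) := by
      rw [← tendsto_sub_nhds_zero_iff]
      apply squeeze_zero_norm hnorm
      have := (tendsto_one_div_add_atTop_nhds_zero_nat.mul_const
        (|z.im|⁻¹ * |z.im|⁻¹)).const_mul (|z.im|⁻¹)
      simpa using this
    have hev : ∀ᶠ n : ℕ in atTop, g n ∈ (V : Set C(OnePoint ℝ, ℂ)) := by
      have hδI : 0 < ‖I - z‖ := by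
        rw [norm_pos_iff]; exact sub_ne_zero.mpr (Ne.symm hzI)
      have hδmI : 0 < ‖-I - z‖ := by
        rw [norm_pos_iff]
        intro hcon
        apply hzmI
        linear_combination -hcon
      have hlt : ∀ᶠ n : ℕ in atTop, (1/(n+1) : ℝ) < min ‖I - z‖ ‖-I - z‖ :=
        tendsto_one_div_add_atTop_nhds_zero_nat.eventually_lt_const (lt_min hδI hδmI)
      filter_upwards [hlt] with n hn
      set w := z + ((1/(n+1) : ℝ) : ℂ) with hwdef
      have hwz : z ≠ w := by
        intro hcon
        have h0 : ((1/(n+1) : ℝ) : ℂ) = 0 := by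
          rw [hwdef] at hcon
          linear_combination -hcon
        rw [Complex.ofReal_eq_zero] at h0
        exact (by positivity : (0:ℝ) < 1/(n+1)).ne' h0
      have hnormw : ‖w - z‖ = (1/(n+1) : ℝ) := by
        have : w - z = ((1/(n+1) : ℝ) : ℂ) := by rw [hwdef]; ring
        rw [this, Complex.norm_real, Real.norm_eq_abs, abs_of_pos]
        positivity
      have hwI : w ≠ I := by
        intro hcon
        have : ‖I - z‖ = (1/(n+1) : ℝ) := by rw [← hcon, hnormw]
        have h5 := hn
        rw [this] at h5
        exact absurd (lt_min_iff.mp h5).1 (lt_irrefl _)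
      have hwmI : w ≠ -I := by
        intro hcon
        have : ‖-I - z‖ = (1/(n+1) : ℝ) := by rw [← hcon, hnormw]
        have h5 := hn
        rw [this] at h5
        exact absurd (lt_min_iff.mp h5).2 (lt_irrefl _)
      have hgn : g n = (w - z)⁻¹ • (Rmap z hz - Rmap w (him n)) :=
        Rmap_mul hz (him n) hwz
      rw [hgn]
      apply Submodule.smul_mem
      apply Submodule.sub_mem
      · exact Submodule.subset_span (Set.mem_insert_of_mem _ ⟨z, hz, hzI, hzmI, rfl⟩)
      · exact Submodule.subset_span (Set.mem_insert_of_mem _ ⟨w, him n, hwI, hwmI, rfl⟩)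
    have h6 : Rmap z hz * Rmap z hz ∈ closure (V : Set C(OnePoint ℝ, ℂ)) :=
      mem_closure_of_tendsto htend hev
    rw [← hWclosure] at h6
    exact h6
  -- products of elements of S lie in W
  have hSS : ∀ p ∈ S, ∀ q ∈ S, p * q ∈ W := by
    intro p hp q hq
    rcases Set.mem_insert_iff.mp hp with rfl | ⟨z, hz, hzI, hzmI, rfl⟩
    · rw [one_mul]; exact hVW (hSV hq)
    rcases Set.mem_insert_iff.mp hq with rfl | ⟨w, hw, hwI, hwmI, rfl⟩
    · rw [mul_one]
      exact hVW (hSV (Set.mem_insert_of_mem _ ⟨z, hz, hzI, hzmI, rfl⟩))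
    rcases eq_or_ne z w with rfl | hzw
    · exact hsquare z hz hzI hzmI
    · rw [Rmap_mul hz hw hzw]
      apply Submodule.smul_mem
      apply Submodule.sub_mem <;> apply hVW <;> apply hSV
      · exact Set.mem_insert_of_mem _ ⟨z, hz, hzI, hzmI, rfl⟩
      · exact Set.mem_insert_of_mem _ ⟨w, hw, hwI, hwmI, rfl⟩
  -- products of elements of V lie in W
  have hVS : ∀ p ∈ V, ∀ q ∈ S, p * q ∈ W := by
    intro p hp q hq
    induction hp using Submodule.span_induction with
    | mem x hx => exact hSS x hx q hq
    | zero => rw [zero_mul]; exact W.zero_mem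
    | add x y hx hy ihx ihy => rw [add_mul]; exact W.add_mem ihx ihy
    | smul a x hx ih => rw [smul_mul_assoc]; exact W.smul_mem a ih
  have hVV : ∀ p ∈ V, ∀ q ∈ V, p * q ∈ W := by
    intro p hp q hq
    induction hq using Submodule.span_induction with
    | mem x hx => exact hVS p hp x hx
    | zero => rw [mul_zero]; exact W.zero_mem
    | add x y hx hy ihx ihy => rw [mul_add]; exact W.add_mem ihx ihy
    | smul a x hx ih => rw [mul_smul_comm]; exact W.smul_mem a ih
  -- closure steps
  have hWV : ∀ f ∈ W, ∀ q ∈ V, f * q ∈ W := by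
    intro f hf q hq
    have hcl : IsClosed {p : C(OnePoint ℝ, ℂ) | p * q ∈ W} :=
      hWclosed.preimage (continuous_mul_right q)
    have hsub : (V : Set C(OnePoint ℝ, ℂ)) ⊆ {p | p * q ∈ W} := fun p hp => hVV p hp q hq
    have := closure_minimal hsub hcl
    rw [← hWclosure] at this
    exact this hf
  have hWW : ∀ f ∈ W, ∀ g ∈ W, f * g ∈ W := by
    intro f hf g hg
    have hcl : IsClosed {p : C(OnePoint ℝ, ℂ) | f * p ∈ W} :=
      hWclosed.preimage (continuous_mul_left f)
    have hsub : (V : Set C(OnePoint ℝ, ℂ)) ⊆ {p | f * p ∈ W} := fun p hp => hWV f hf p hp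
    have := closure_minimal hsub hcl
    rw [← hWclosure] at this
    exact this hg
  -- star-closedness
  have hstarV : ∀ p ∈ V, star p ∈ V := by
    intro p hp
    induction hp using Submodule.span_induction with
    | mem x hx =>
      rcases Set.mem_insert_iff.mp hx with rfl | ⟨z, hz, hzI, hzmI, rfl⟩
      · rw [star_one]; exact hSV (Set.mem_insert _ _)
      · rw [star_Rmap hz]
        apply hSV
        apply Set.mem_insert_of_mem
        refine ⟨starRingEnd ℂ z, by simpa using hz, ?_, ?_, rfl⟩
        · intro hcon
          apply hzmI
          apply_fun (starRingEnd ℂ) at hcon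
          simpa using hcon
        · intro hcon
          apply hzI
          apply_fun (starRingEnd ℂ) at hcon
          simpa using hcon
    | zero => rw [star_zero]; exact V.zero_mem
    | add x y hx hy ihx ihy => rw [star_add]; exact V.add_mem ihx ihy
    | smul a x hx ih => rw [star_smul]; exact V.smul_mem _ ih
  have hstarW : ∀ f ∈ W, star f ∈ W := by
    intro f hf
    have hcl : IsClosed {p : C(OnePoint ℝ, ℂ) | star p ∈ W} :=
      hWclosed.preimage continuous_star
    have hsub : (V : Set C(OnePoint ℝ, ℂ)) ⊆ {p | star p ∈ W} :=
      fun p hp => hVW (hstarV p hp)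
    have := closure_minimal hsub hcl
    rw [← hWclosure] at this
    exact this hf
  -- the star subalgebra generated by the resolvents is contained in W
  have hAW : ∀ f ∈ StarAlgebra.adjoin ℂ Sgen, f ∈ W := by
    intro f hf
    induction hf using StarAlgebra.adjoin_induction with
    | mem x hx => exact hVW (hSV (Set.mem_insert_of_mem _ hx))
    | algebraMap r =>
      rw [Algebra.algebraMap_eq_smul_one]
      exact W.smul_mem r (hVW (hSV (Set.mem_insert _ _)))
    | add x y hx hy ihx ihy => exact W.add_mem ihx ihy
    | mul x y hx hy ihx ihy => exact hWW x ihx y ihy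
    | star x hx ih => exact hstarW x ih
  -- separation of points
  have hsep : (StarAlgebra.adjoin ℂ Sgen).SeparatesPoints := by
    intro p q hpq
    have h2I : (2*I : ℂ).im ≠ 0 := by simp
    have h2I1 : (2*I:ℂ) ≠ I := by
      intro h; apply_fun Complex.im at h; simp at h
    have h2I2 : (2*I:ℂ) ≠ -I := by
      intro h; apply_fun Complex.im at h; simp at h; norm_num at h
    refine ⟨_, ⟨Rmap (2*I) h2I, ?_, rfl⟩, ?_⟩
    · exact StarAlgebra.subset_adjoin ℂ _ ⟨2*I, h2I, h2I1, h2I2, rfl⟩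
    · show (Rmap (2*I) h2I) p ≠ (Rmap (2*I) h2I) q
      induction p using OnePoint.rec with
      | infty =>
        induction q using OnePoint.rec with
        | infty => exact absurd rfl hpq
        | coe y =>
          intro h
          have h' : (0:ℂ) = (2*I - (y:ℂ))⁻¹ := h
          exact (inv_ne_zero (sub_ne' h2I y)) h'.symm
      | coe x =>
        induction q using OnePoint.rec with
        | infty =>
          intro h
          have h' : (2*I - (x:ℂ))⁻¹ = (0:ℂ) := h
          exact (inv_ne_zero (sub_ne' h2I x)) h'
        | coe y =>
          intro h
          have h' : (2*I - (x:ℂ))⁻¹ = (2*I - (y:ℂ))⁻¹ := h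
          rw [inv_inj] at h'
          apply hpq
          have hxy : (x:ℂ) = y := by linear_combination -h'
          rw [OnePoint.coe_eq_coe]
          exact_mod_cast hxy
  -- density
  have hdense := ContinuousMap.starSubalgebra_topologicalClosure_eq_top_of_separatesPoints
    (StarAlgebra.adjoin ℂ Sgen) hsep
  have hall : ∀ f : C(OnePoint ℝ, ℂ), f ∈ W := by
    intro f
    have h1 : f ∈ (StarAlgebra.adjoin ℂ Sgen).topologicalClosure := by
      rw [hdense]; trivial
    have h2 : f ∈ closure ((StarAlgebra.adjoin ℂ Sgen : StarSubalgebra ℂ _) :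
        Set C(OnePoint ℝ, ℂ)) := h1
    have h3 : closure ((StarAlgebra.adjoin ℂ Sgen : StarSubalgebra ℂ _) :
        Set C(OnePoint ℝ, ℂ)) ⊆ (W : Set C(OnePoint ℝ, ℂ)) :=
      closure_minimal (fun g hg => hAW g hg) hWclosed
    exact h3 h2
  -- integration functionals
  have hInt : ∀ (ρ : Measure ℝ) [IsFiniteMeasure ρ] (f : C(OnePoint ℝ, ℂ)),
      Integrable (fun x : ℝ => f x) ρ := by
    intro ρ _ f
    exact integrable_of_bound ρ _ (f.continuous.comp OnePoint.continuous_coe) ‖f‖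
      (fun x => f.norm_coe_le_norm _)
  have hcont : ∀ (ρ : Measure ℝ) [IsFiniteMeasure ρ],
      Continuous (fun f : C(OnePoint ℝ, ℂ) => ∫ x : ℝ, f x ∂ρ) := by
    intro ρ _
    apply LipschitzWith.continuous (K := (ρ Set.univ).toNNReal)
    apply LipschitzWith.of_dist_le_mul
    intro f g
    rw [dist_eq_norm, ← integral_sub (hInt ρ f) (hInt ρ g)]
    have hb : ∀ᵐ x ∂ρ, ‖(f - g) ((x : ℝ) : OnePoint ℝ)‖ ≤ dist f g := by
      apply ae_of_all
      intro x
      rw [dist_eq_norm]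
      exact (f - g).norm_coe_le_norm _
    calc ‖∫ x : ℝ, (f x - g x) ∂ρ‖ = ‖∫ x : ℝ, (f - g) ((x : ℝ) : OnePoint ℝ) ∂ρ‖ := by
          congr 1
      _ ≤ dist f g * (ρ Set.univ).toReal := norm_integral_le_of_norm_le_const hb
      _ = ((ρ Set.univ).toNNReal : ℝ) * dist f g := mul_comm _ _
  -- the integrals agree on V
  have hspan : ∀ f ∈ V, (∫ x : ℝ, f x ∂μ) = ∫ x : ℝ, f x ∂ν := by
    intro f hf
    induction hf using Submodule.span_induction with
    | mem x hx =>
      rcases Set.mem_insert_iff.mp hx with rfl | ⟨z, hz, hzI, hzmI, rfl⟩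
      · simp only [ContinuousMap.one_apply]
        rw [integral_const, integral_const, measureReal_def, measureReal_def, hmass]
      · simp only [Rmap_coe]
        exact hG z hz hzI hzmI
    | zero => simp
    | add x y hx hy ihx ihy =>
      simp only [ContinuousMap.add_apply]
      rw [integral_add (hInt μ x) (hInt μ y), integral_add (hInt ν x) (hInt ν y), ihx, ihy]
    | smul a x hx ih =>
      simp only [ContinuousMap.smul_apply, smul_eq_mul]
      rw [integral_const_mul, integral_const_mul, ih]
  -- conclusion
  intro f
  have hfW := hall f
  rw [← SetLike.mem_coe, hWclosure] at hfW
  have hclosed : IsClosed {f : C(OnePoint ℝ, ℂ) | (∫ x : ℝ, f x ∂μ) = ∫ x : ℝ, f x ∂ν} :=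
    isClosed_eq (hcont μ) (hcont ν)
  exact closure_minimal hspan hclosed hfW

end SW

open Metric in
/-- Two finite measures with equal mass and equal Cauchy transforms are equal. -/
theorem meas_eq (μ ν : Measure ℝ) [IsFiniteMeasure μ] [IsFiniteMeasure ν]
    (hmass : μ Set.univ = ν Set.univ)
    (hG : ∀ z : ℂ, z.im ≠ 0 → z ≠ I → z ≠ -I →
      ∫ x, (z - (x:ℂ))⁻¹ ∂μ = ∫ x, (z - (x:ℂ))⁻¹ ∂ν) : μ = ν := by
  have hint := integral_eq_of_res μ ν hmass hG
  -- equality on compact sets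
  have hKeq : ∀ K : Set ℝ, IsCompact K → IsClosed K → μ K = ν K := by
    intro K hKcomp hKcl
    set fs : ℕ → BoundedContinuousFunction ℝ NNReal :=
      fun n => thickenedIndicator (δ := (1:ℝ)/(n+1)) Nat.one_div_pos_of_nat K with hfs
    have hle1 : ∀ n x, fs n x ≤ 1 := fun n x => thickenedIndicator_le_one _ _ _
    have htend : Tendsto (fun n x => fs n x) atTop (𝓝 (K.indicator fun _ => (1:ℝ≥0))) := by
      have key := thickenedIndicator_tendsto_indicator_closure
        (δseq := fun n : ℕ => (1:ℝ)/(n+1)) (fun _ => Nat.one_div_pos_of_nat)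
        tendsto_one_div_add_atTop_nhds_zero_nat K
      rw [hKcl.closure_eq] at key
      exact key
    have hl1 := measure_of_cont_bdd_of_tendsto_indicator μ hKcl.measurableSet fs hle1 htend
    have hl2 := measure_of_cont_bdd_of_tendsto_indicator ν hKcl.measurableSet fs hle1 htend
    -- the lintegrals agree
    have heq : ∀ n, (∫⁻ x, (fs n x : ℝ≥0∞) ∂μ) = ∫⁻ x, (fs n x : ℝ≥0∞) ∂ν := by
      intro n
      have hcont : Continuous (fun x : ℝ => ((fs n x : ℝ) : ℂ)) :=
        Complex.continuous_ofReal.comp (NNReal.continuous_coe.comp (fs n).continuous)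
      have hcth : IsCompact (cthickening ((1:ℝ)/(n+1)) K) := hKcomp.cthickening
      have hzero : ∀ x : ℝ, x ∉ cthickening ((1:ℝ)/(n+1)) K → fs n x = 0 := by
        intro x hx
        apply thickenedIndicator_zero
        intro hcon
        exact hx (thickening_subset_cthickening _ _ hcon)
      have htd : Tendsto (fun x : ℝ => ((fs n x : ℝ) : ℂ)) (Filter.coclosedCompact ℝ) (𝓝 0) := by
        rw [Filter.coclosedCompact_eq_cocompact]
        apply Tendsto.congr' ?_ (tendsto_const_nhds (x := (0:ℂ)))
        rw [Filter.eventuallyEq_iff_exists_mem]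
        refine ⟨(cthickening ((1:ℝ)/(n+1)) K)ᶜ, ?_, ?_⟩
        · exact Filter.hasBasis_cocompact.mem_of_mem hcth
        · intro x hx
          simp [hzero x hx]
      set F : C(OnePoint ℝ, ℂ) :=
        OnePoint.continuousMapMk ⟨fun x : ℝ => ((fs n x : ℝ) : ℂ), hcont⟩ 0 htd with hF
      have hFeq := hint F
      have hFcoe : ∀ x : ℝ, F ((x:ℝ) : OnePoint ℝ) = ((fs n x : ℝ) : ℂ) := fun x => rfl
      have hreal : (∫ x : ℝ, ((fs n x : ℝ)) ∂μ) = ∫ x : ℝ, ((fs n x : ℝ)) ∂ν := by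
        have h1 : (∫ x : ℝ, ((fs n x : ℝ) : ℂ) ∂μ) = ∫ x : ℝ, ((fs n x : ℝ) : ℂ) ∂ν := by
          simpa [hFcoe] using hFeq
        have h2 : ((∫ x : ℝ, ((fs n x : ℝ)) ∂μ : ℝ) : ℂ) = ((∫ x : ℝ, ((fs n x : ℝ)) ∂ν : ℝ) : ℂ) :=
          (integral_ofReal).symm.trans (h1.trans integral_ofReal)
        exact_mod_cast h2
      have hIntR : ∀ (ρ : Measure ℝ) [IsFiniteMeasure ρ],
          Integrable (fun x : ℝ => ((fs n x : ℝ))) ρ := by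
        intro ρ _
        apply (integrable_const (1:ℝ)).mono'
          ((NNReal.continuous_coe.comp (fs n).continuous)).aestronglyMeasurable
        apply ae_of_all
        intro x
        have hb : |((fs n x : ℝ))| ≤ 1 := by
          rw [_root_.abs_of_nonneg (fs n x).coe_nonneg]
          exact_mod_cast hle1 n x
        simpa using hb
      rw [lintegral_coe_eq_integral _ (hIntR μ), lintegral_coe_eq_integral _ (hIntR ν), hreal]
    have hl1' : Tendsto (fun n => ∫⁻ x, (fs n x : ℝ≥0∞) ∂ν) atTop (𝓝 (μ K)) := by
      have : (fun n => ∫⁻ x, (fs n x : ℝ≥0∞) ∂μ) = fun n => ∫⁻ x, (fs n x : ℝ≥0∞) ∂ν :=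
        funext heq
      rwa [this] at hl1
    exact tendsto_nhds_unique hl1' hl2
  -- equality on closed sets
  have hFeq : ∀ F : Set ℝ, IsClosed F → μ F = ν F := by
    intro F hFcl
    have hmono : Monotone (fun n : ℕ => F ∩ Set.Icc (-(n:ℝ)) (n:ℝ)) := by
      intro m n hmn
      apply Set.inter_subset_inter_right
      apply Set.Icc_subset_Icc
      · simp only [neg_le_neg_iff]
        exact_mod_cast hmn
      · exact_mod_cast hmn
    have hunion : (⋃ n : ℕ, F ∩ Set.Icc (-(n:ℝ)) (n:ℝ)) = F := by
      ext x
      simp only [Set.mem_iUnion, Set.mem_inter_iff, Set.mem_Icc]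
      constructor
      · rintro ⟨n, hxF, _⟩; exact hxF
      · intro hxF
        refine ⟨⌈|x|⌉₊, hxF, ?_, ?_⟩
        · have h1 : |x| ≤ (⌈|x|⌉₊ : ℝ) := Nat.le_ceil _
          have h2 := neg_abs_le x
          linarith
        · have h1 : |x| ≤ (⌈|x|⌉₊ : ℝ) := Nat.le_ceil _
          have h2 := le_abs_self x
          linarith
    have hvals : ∀ n : ℕ, μ (F ∩ Set.Icc (-(n:ℝ)) (n:ℝ)) = ν (F ∩ Set.Icc (-(n:ℝ)) (n:ℝ)) := by
      intro n
      apply hKeq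
      · exact isCompact_Icc.inter_left hFcl
      · exact hFcl.inter isClosed_Icc
    have t1 := tendsto_measure_iUnion_atTop (μ := μ) hmono
    have t2 := tendsto_measure_iUnion_atTop (μ := ν) hmono
    rw [hunion] at t1 t2
    have t1' : Tendsto (⇑ν ∘ fun n : ℕ => F ∩ Set.Icc (-(n:ℝ)) (n:ℝ)) atTop (𝓝 (μ F)) := by
      have hco : (⇑μ ∘ fun n : ℕ => F ∩ Set.Icc (-(n:ℝ)) (n:ℝ))
          = (⇑ν ∘ fun n : ℕ => F ∩ Set.Icc (-(n:ℝ)) (n:ℝ)) := funext fun n => hvals n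
      rwa [hco] at t1
    exact tendsto_nhds_unique t1' t2
  -- conclude by the π-system of closed sets
  apply ext_of_generate_finite {s : Set ℝ | IsClosed s} ?_ isPiSystem_isClosed
    (fun s hs => hFeq s hs) (hFeq _ isClosed_univ)
  rw [BorelSpace.measurable_eq (α := ℝ), borel_eq_generateFrom_isClosed]

/-- Measure-level version of the main theorem. -/
theorem main_meas (b₁ b₂ : ℝ) (μ ν : Measure ℝ) [IsFiniteMeasure μ] [IsFiniteMeasure ν]
    (h : ∀ z : ℂ, 0 < z.im →
      (b₁:ℂ) + ∫ x, (1 + (x:ℂ) * z) / (z - x) ∂μ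
        = (b₂:ℂ) + ∫ x, (1 + (x:ℂ) * z) / (z - x) ∂ν) :
    b₁ = b₂ ∧ μ = ν := by
  have hE : ∀ z : ℂ, z.im ≠ 0 →
      (∫ x, (1 + (x:ℂ) * z) / (z - x) ∂μ) - (∫ x, (1 + (x:ℂ) * z) / (z - x) ∂ν)
        = ((b₂ : ℂ) - (b₁ : ℂ)) := by
    intro z hz
    rcases hz.lt_or_gt with hneg | hpos
    · -- use the conjugate point
      have hz' : 0 < ((starRingEnd ℂ) z).im := by
        rw [Complex.conj_im]
        linarith
      have h0 := h ((starRingEnd ℂ) z) hz'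
      apply_fun (starRingEnd ℂ) at h0
      rw [map_add, map_add, ← integral_conj, ← integral_conj, Complex.conj_ofReal,
        Complex.conj_ofReal] at h0
      have hcongr : ∀ x : ℝ,
          (starRingEnd ℂ) ((1 + (x:ℂ) * ((starRingEnd ℂ) z)) / ((starRingEnd ℂ) z - x))
            = (1 + (x:ℂ) * z) / (z - x) := by
        intro x
        simp only [map_div₀, map_add, map_one, map_mul, map_sub, Complex.conj_ofReal,
          Complex.conj_conj]
      rw [integral_congr_ae (ae_of_all _ hcongr), integral_congr_ae (ae_of_all _ hcongr)] at h0
      linear_combination h0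
    · linear_combination h z hpos
  obtain ⟨hG, hmass, hc⟩ := key_derivation μ ν _ hE
  have hb : b₁ = b₂ := by
    have : (b₂ : ℂ) = (b₁ : ℂ) := by linear_combination hc
    exact_mod_cast this.symm
  exact ⟨hb, meas_eq μ ν hmass hG⟩

end FreeUniq

open MeasureTheory

/-- The integral of a complex-valued function against a finite signed measure,
defined via the Jordan decomposition `τ = τ⁺ − τ⁻`. -/
noncomputable def signedIntegral (τ : SignedMeasure ℝ) (f : ℝ → ℂ) : ℂ :=
  (∫ x, f x ∂τ.toJordanDecomposition.posPart) -
    (∫ x, f x ∂τ.toJordanDecomposition.negPart)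

/-- Uniqueness of free characteristic pairs: if two pairs `(b₁, τ₁)`, `(b₂, τ₂)` give the
same Pick-Nevanlinna-type integral representation on the upper half-plane, they coincide. -/
theorem uniqueness_of_free_characteristic_pair
    (b₁ b₂ : ℝ) (τ₁ τ₂ : SignedMeasure ℝ)
    (h : ∀ z : ℂ, 0 < z.im →
      (b₁ : ℂ) + signedIntegral τ₁ (fun x => (1 + (x : ℂ) * z) / (z - (x : ℂ)))
        = (b₂ : ℂ) + signedIntegral τ₂ (fun x => (1 + (x : ℂ) * z) / (z - (x : ℂ)))) :
    b₁ = b₂ ∧ τ₁ = τ₂ := by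
  set p₁ := τ₁.toJordanDecomposition.posPart with hp₁
  set n₁ := τ₁.toJordanDecomposition.negPart with hn₁
  set p₂ := τ₂.toJordanDecomposition.posPart with hp₂
  set n₂ := τ₂.toJordanDecomposition.negPart with hn₂
  have h' : ∀ z : ℂ, 0 < z.im →
      (b₁:ℂ) + ∫ x, (1 + (x:ℂ) * z) / (z - x) ∂(p₁ + n₂)
        = (b₂:ℂ) + ∫ x, (1 + (x:ℂ) * z) / (z - x) ∂(p₂ + n₁) := by
    intro z hz
    have hzne : z.im ≠ 0 := ne_of_gt hz
    have h0 := h z hz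
    simp only [signedIntegral] at h0
    have e1 := integral_add_measure (FreeUniq.int_fz p₁ hzne) (FreeUniq.int_fz n₂ hzne)
    have e2 := integral_add_measure (FreeUniq.int_fz p₂ hzne) (FreeUniq.int_fz n₁ hzne)
    linear_combination h0 + e1 - e2
  obtain ⟨hb, hμν⟩ := FreeUniq.main_meas b₁ b₂ (p₁ + n₂) (p₂ + n₁) h'
  refine ⟨hb, ?_⟩
  apply VectorMeasure.ext
  intro s hs
  have happ : ∀ τ : SignedMeasure ℝ, τ s
      = (τ.toJordanDecomposition.posPart s).toReal
        - (τ.toJordanDecomposition.negPart s).toReal := by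
    intro τ
    have e : τ = τ.toJordanDecomposition.posPart.toSignedMeasure
        - τ.toJordanDecomposition.negPart.toSignedMeasure :=
      (SignedMeasure.toSignedMeasure_toJordanDecomposition τ).symm
    conv_lhs => rw [e]
    rw [VectorMeasure.sub_apply, Measure.toSignedMeasure_apply_measurable hs,
      Measure.toSignedMeasure_apply_measurable hs]
    rfl
  rw [happ τ₁, happ τ₂]
  have hs1 : p₁ s + n₂ s = p₂ s + n₁ s := by
    rw [← Measure.add_apply, ← Measure.add_apply, hμν]
  have htr : (p₁ s).toReal + (n₂ s).toReal = (p₂ s).toReal + (n₁ s).toReal := by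
    rw [← ENNReal.toReal_add (measure_ne_top _ _) (measure_ne_top _ _),
      ← ENNReal.toReal_add (measure_ne_top _ _) (measure_ne_top _ _), hs1]
  linarith
end

section
/- Let ν be a Borel measure on ℝ with ∫_ℝ (1 ∧ x²) dν(x) < ∞. Then for every z ∈ ℂ with Im z ≠ 0, the function x ↦ 1/(1 − zx) − 1 − zx·𝟙_{[−1,1]}(x) is ν-integrable. -/
open MeasureTheory
open scoped ENNReal

/-- If `ν` is a Borel measure on ℝ with `∫ (1 ∧ x²) dν < ∞`, then for every `z` with
`Im z ≠ 0` the kernel `x ↦ 1/(1 − zx) − 1 − zx·𝟙_{[−1,1]}(x)` is `ν`-integrable. -/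
theorem free_levy_kernel_integrable
    (ν : Measure ℝ)
    (hν : ∫⁻ x, ENNReal.ofReal (min 1 (x ^ 2)) ∂ν < ⊤)
    (z : ℂ) (hz : z.im ≠ 0) :
    Integrable (fun x : ℝ =>
      (1 - z * (x : ℂ))⁻¹ - 1 -
        z * (x : ℂ) * (Set.Icc (-1 : ℝ) 1).indicator (fun _ => (1 : ℂ)) x) ν := by
  have hz0 : z ≠ 0 := fun h => hz (by simp [h])
  have hzpos : 0 < ‖z‖ := norm_pos_iff.mpr hz0
  have him : 0 < |z.im| := abs_pos.mpr hz
  have key : ∀ x : ℝ, |z.im| ≤ ‖z‖ * ‖1 - z * x‖ := by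
    intro x
    have h1 : ((starRingEnd ℂ) z * (1 - z * x)).im = -z.im := by
      simp [Complex.mul_im, Complex.sub_im, Complex.sub_re, Complex.mul_re,
        Complex.mul_im, Complex.ofReal_re, Complex.ofReal_im]
      ring
    calc |z.im| = |((starRingEnd ℂ) z * (1 - z * x)).im| := by rw [h1, abs_neg]
      _ ≤ ‖(starRingEnd ℂ) z * (1 - z * x)‖ := Complex.abs_im_le_norm _
      _ = ‖z‖ * ‖1 - z * x‖ := by rw [norm_mul, Complex.norm_conj]
  have hne : ∀ x : ℝ, (1 : ℂ) - z * x ≠ 0 := by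
    intro x h
    have := key x
    rw [h, norm_zero, mul_zero] at this
    linarith
  have hinv : ∀ x : ℝ, ‖(1 - z * x)⁻¹‖ ≤ ‖z‖ / |z.im| := by
    intro x
    rw [norm_inv, inv_le_comm₀ (norm_pos_iff.mpr (hne x)) (by positivity), inv_div,
      div_le_iff₀ hzpos]
    nlinarith [key x]
  set C : ℝ := ‖z‖ ^ 3 / |z.im| + (‖z‖ / |z.im| + 1) with hC
  have hg : Integrable (fun x : ℝ => C * min 1 (x ^ 2)) ν := by
    apply Integrable.const_mul
    constructor
    · exact (measurable_const.min (measurable_id.pow_const 2)).aestronglyMeasurable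
    · rw [hasFiniteIntegral_iff_ofReal (Filter.Eventually.of_forall fun x => by positivity)]
      exact hν
  apply Integrable.mono' hg
  · apply Measurable.aestronglyMeasurable
    apply Measurable.sub
    apply Measurable.sub
    · exact ((measurable_const.sub ((Complex.measurable_ofReal).const_mul z)).inv)
    · exact measurable_const
    · exact (Complex.measurable_ofReal.const_mul z).mul
        (measurable_const.indicator measurableSet_Icc)
  · refine Filter.Eventually.of_forall fun x => ?_
    by_cases hx : x ∈ Set.Icc (-1 : ℝ) 1
    · have hx2 : x ^ 2 ≤ 1 := by
        obtain ⟨h1, h2⟩ := hx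
        nlinarith
      have hmin : min 1 (x ^ 2) = x ^ 2 := min_eq_right hx2
      rw [Set.indicator_of_mem hx]
      have heq : (1 - z * (x : ℂ))⁻¹ - 1 - z * (x : ℂ) * 1
          = z ^ 2 * (x : ℂ) ^ 2 * (1 - z * x)⁻¹ := by
        field_simp [hne x]
        ring
      rw [heq]
      rw [norm_mul, norm_mul, norm_pow, norm_pow, Complex.norm_real, Real.norm_eq_abs]
      have hb : ‖z‖ ^ 2 * |x| ^ 2 * ‖(1 - z * (x:ℂ))⁻¹‖
          ≤ ‖z‖ ^ 2 * |x| ^ 2 * (‖z‖ / |z.im|) := by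
        apply mul_le_mul_of_nonneg_left (hinv x) (by positivity)
      rw [hmin]
      have : ‖z‖ ^ 2 * |x| ^ 2 * (‖z‖ / |z.im|)
          = (‖z‖ ^ 3 / |z.im|) * x ^ 2 := by
        rw [sq_abs]; ring
      rw [this] at hb
      refine hb.trans ?_
      rw [hC]
      have h1 : 0 ≤ x ^ 2 := sq_nonneg x
      have h2 : 0 ≤ ‖z‖ / |z.im| + 1 := by positivity
      nlinarith
    · have hx2 : (1 : ℝ) ≤ x ^ 2 := by
        simp only [Set.mem_Icc, not_and_or, not_le] at hx
        rcases hx with h | h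
        · nlinarith
        · nlinarith
      have hmin : min 1 (x ^ 2) = 1 := min_eq_left hx2
      rw [Set.indicator_of_notMem hx, mul_zero, sub_zero, hmin, mul_one]
      calc ‖(1 - z * (x : ℂ))⁻¹ - 1‖ ≤ ‖(1 - z * (x : ℂ))⁻¹‖ + ‖(1 : ℂ)‖ := norm_sub_le _ _
        _ ≤ ‖z‖ / |z.im| + 1 := by
            rw [norm_one]
            exact add_le_add_left (hinv x) 1
        _ ≤ C := by
            rw [hC]
            have : 0 ≤ ‖z‖ ^ 3 / |z.im| := by positivity
            linarith
end

section
/- Let a, λ > 0 and c ∈ ℝ \ {0} with λ ≤ (a/(2c))², i.e. 4c²λ ≤ a². Define q(z) = (z + c(λ+1) + ai)² − 4c(z + ai) for z ∈ ℂ. Then for every z ∈ ℂ with Im z > 0, q(z) is not a nonnegative real number, i.e. q(z) ∉ {w ∈ ℂ : Im w = 0 and Re w ≥ 0}. -/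
/-- Let `a, l > 0`, `c ≠ 0` with `4c²l ≤ a²`. Then
`q(z) = (z + c(l+1) + ai)² − 4c(z + ai)` avoids the nonnegative real axis on the
upper half-plane. -/
theorem q_avoids_nonneg_reals (a l c : ℝ) (ha : 0 < a) (hl : 0 < l) (hc : c ≠ 0)
    (hlam : 4 * c ^ 2 * l ≤ a ^ 2) (z : ℂ) (hz : 0 < z.im) :
    ¬ (((z + (c : ℂ) * ((l : ℂ) + 1) + (a : ℂ) * Complex.I) ^ 2
          - 4 * (c : ℂ) * (z + (a : ℂ) * Complex.I)).im = 0 ∧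
        0 ≤ ((z + (c : ℂ) * ((l : ℂ) + 1) + (a : ℂ) * Complex.I) ^ 2
          - 4 * (c : ℂ) * (z + (a : ℂ) * Complex.I)).re) := by
  rintro ⟨h1, h2⟩
  simp [Complex.add_im, Complex.add_re, Complex.mul_im, Complex.mul_re, pow_two,
    Complex.sub_im, Complex.sub_re, Complex.I_re, Complex.I_im] at h1 h2
  -- h1 forces z.re = c*(1-l)
  have hx : z.re = c * (1 - l) := by nlinarith [hz, ha]
  nlinarith [sq_nonneg (z.im), hz, ha, mul_pos hz ha]
end

section
/- Let a, λ > 0 and c ∈ ℝ \ {0} with 4c²λ ≤ a², and set q(z) = (z + c(λ+1) + ai)² − 4c(z + ai). Then for every z ∈ ℂ with Im z > 0: (i) there is a unique w ∈ ℂ with Im w > 0 and w² = q(z); and (ii) defining F(z) = (z + c(λ+1) + ai + w)/2 with this w, one has Im F(z) > 0, F(z) ≠ c, and F(z) − ai − λ·c·F(z)/(F(z) − c) = z. -/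
/-- Let `a, l > 0`, `c ≠ 0` with `4c²l ≤ a²`, and set
`q(z) = (z + c(l+1) + ai)² − 4c(z + ai)`. Then for every `z` in the upper half-plane:
(i) there is a unique `w` in the upper half-plane with `w² = q(z)`; and
(ii) for this `w`, the value `F = (z + c(l+1) + ai + w)/2` lies in the upper half-plane,
differs from `c`, and satisfies `F − ai − lcF/(F − c) = z`. -/
theorem F_transform_MP_deconvolution (a l c : ℝ) (ha : 0 < a) (hl : 0 < l) (hc : c ≠ 0)
    (hlam : 4 * c ^ 2 * l ≤ a ^ 2) (z : ℂ) (hz : 0 < z.im) :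
    (∃! w : ℂ, 0 < w.im ∧
      w ^ 2 = (z + (c : ℂ) * ((l : ℂ) + 1) + (a : ℂ) * Complex.I) ^ 2
        - 4 * (c : ℂ) * (z + (a : ℂ) * Complex.I)) ∧
    (∀ w : ℂ, 0 < w.im →
      w ^ 2 = (z + (c : ℂ) * ((l : ℂ) + 1) + (a : ℂ) * Complex.I) ^ 2
        - 4 * (c : ℂ) * (z + (a : ℂ) * Complex.I) →
      0 < ((z + (c : ℂ) * ((l : ℂ) + 1) + (a : ℂ) * Complex.I + w) / 2).im ∧
      (z + (c : ℂ) * ((l : ℂ) + 1) + (a : ℂ) * Complex.I + w) / 2 ≠ (c : ℂ) ∧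
      (z + (c : ℂ) * ((l : ℂ) + 1) + (a : ℂ) * Complex.I + w) / 2
        - (a : ℂ) * Complex.I
        - (l : ℂ) * (c : ℂ) * ((z + (c : ℂ) * ((l : ℂ) + 1) + (a : ℂ) * Complex.I + w) / 2)
          / ((z + (c : ℂ) * ((l : ℂ) + 1) + (a : ℂ) * Complex.I + w) / 2 - (c : ℂ)) = z) := by
  set Q : ℂ := (z + (c : ℂ) * ((l : ℂ) + 1) + (a : ℂ) * Complex.I) ^ 2
        - 4 * (c : ℂ) * (z + (a : ℂ) * Complex.I) with hQdef
  have hQim : Q.im = 2*(z.re + c*(l+1))*(z.im + a) - 4*c*(z.im + a) := by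
    simp [hQdef, pow_two, Complex.mul_im, Complex.mul_re, Complex.add_im, Complex.add_re]
    ring
  have hQre : Q.re = (z.re + c*(l+1))^2 - (z.im + a)^2 - 4*c*z.re := by
    simp [hQdef, pow_two, Complex.mul_im, Complex.mul_re, Complex.add_im, Complex.add_re]
  have hQnot : ¬ (Q.im = 0 ∧ 0 ≤ Q.re) := by
    rintro ⟨h1, h2⟩
    rw [hQim] at h1
    rw [hQre] at h2
    have hv : 0 < z.im + a := by linarith
    have hu : z.re + c*(l+1) = 2*c := by
      have h1' : (z.im + a) * (2*(z.re + c*(l+1)) - 4*c) = 0 := by linarith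
      rcases mul_eq_zero.1 h1' with h | h
      · linarith
      · linarith
    nlinarith [sq_nonneg (z.im + a), sq_nonneg c]
  obtain ⟨w0, hw0⟩ := IsAlgClosed.exists_pow_nat_eq Q (n := 2) (by norm_num)
  have hsqim : ∀ u : ℂ, (u^2).im = 2*u.re*u.im := by
    intro u; simp [pow_two, Complex.mul_im]; ring
  have hsqre : ∀ u : ℂ, (u^2).re = u.re^2 - u.im^2 := by
    intro u; simp [pow_two, Complex.mul_re]
  have him0 : w0.im ≠ 0 := by
    intro h
    apply hQnot
    constructor
    · rw [← hw0, hsqim, h]; ring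
    · rw [← hw0, hsqre, h]; nlinarith [sq_nonneg w0.re]
  -- choose w with positive imaginary part
  obtain ⟨w, hwim, hw2⟩ : ∃ w : ℂ, 0 < w.im ∧ w ^ 2 = Q := by
    rcases him0.lt_or_gt with h | h
    · exact ⟨-w0, by simpa using h, by rw [← hw0]; ring⟩
    · exact ⟨w0, h, hw0⟩
  constructor
  · refine ⟨w, ⟨hwim, hw2⟩, ?_⟩
    rintro w' ⟨hw'im, hw'2⟩
    have h : (w' - w) * (w' + w) = 0 := by
      have : w'^2 = w^2 := by rw [hw2, hw'2]
      linear_combination this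
    rcases mul_eq_zero.1 h with h | h
    · exact sub_eq_zero.1 h
    · exfalso
      have : w'.im + w.im = 0 := by
        have := congrArg Complex.im h
        simpa using this
      linarith
  · intro w' hw'im hw'2
    set F : ℂ := (z + (c : ℂ) * ((l : ℂ) + 1) + (a : ℂ) * Complex.I + w') / 2 with hFdef
    have hFim : 0 < F.im := by
      simp [hFdef, Complex.add_im, Complex.div_im]
      nlinarith [hw'im, hz, ha]
    have hFne : F ≠ (c : ℂ) := by
      intro h
      have hw' : w' = 2*(c:ℂ) - z - ((c : ℂ) * ((l : ℂ) + 1) + (a : ℂ) * Complex.I) := by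
        have := h
        rw [hFdef] at this
        field_simp at this
        linear_combination this
      rw [hw'] at hw'2
      have hcl : ((c:ℝ)^2 * l : ℂ) = 0 := by
        linear_combination (-(1:ℂ)/4) * hw'2
      have : (c:ℝ)^2 * l = 0 := by exact_mod_cast hcl
      exact mul_ne_zero (pow_ne_zero 2 hc) (ne_of_gt hl) this
    refine ⟨hFim, hFne, ?_⟩
    have hFc : F - (c:ℂ) ≠ 0 := sub_ne_zero.2 hFne
    field_simp
    linear_combination ((1:ℂ)/4) * hw'2
end

section
/- Let a, σ > 0 with 2σ ≤ a. Then for every z ∈ ℂ with Im z > 0: (i) the number (z + ai)² + 4σ² is not a nonnegative real number; (ii) there is a unique w ∈ ℂ with Im w > 0 and w² = (z + ai)² + 4σ²; and (iii) defining F(z) = (z + ai + w)/2 with this w, one has Im F(z) > 0, F(z) ≠ 0, and F(z) − ai − σ²/F(z) = z. -/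
/-- Let `a, σ > 0` with `2σ ≤ a`. Then for every `z` in the upper half-plane:
(i) `(z + ai)² + 4σ²` is not a nonnegative real number;
(ii) there is a unique `w` in the upper half-plane with `w² = (z + ai)² + 4σ²`; and
(iii) for this `w`, the value `F = (z + ai + w)/2` lies in the upper half-plane, is nonzero,
and satisfies `F − ai − σ²/F = z`. -/
theorem F_transform_semicircle_deconvolution (a σ : ℝ) (ha : 0 < a) (hσ : 0 < σ)
    (h2σ : 2 * σ ≤ a) (z : ℂ) (hz : 0 < z.im) :
    (¬ (((z + (a : ℂ) * Complex.I) ^ 2 + 4 * (σ : ℂ) ^ 2).im = 0 ∧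
        0 ≤ ((z + (a : ℂ) * Complex.I) ^ 2 + 4 * (σ : ℂ) ^ 2).re)) ∧
    (∃! w : ℂ, 0 < w.im ∧ w ^ 2 = (z + (a : ℂ) * Complex.I) ^ 2 + 4 * (σ : ℂ) ^ 2) ∧
    (∀ w : ℂ, 0 < w.im →
      w ^ 2 = (z + (a : ℂ) * Complex.I) ^ 2 + 4 * (σ : ℂ) ^ 2 →
      0 < ((z + (a : ℂ) * Complex.I + w) / 2).im ∧
      (z + (a : ℂ) * Complex.I + w) / 2 ≠ 0 ∧
      (z + (a : ℂ) * Complex.I + w) / 2 - (a : ℂ) * Complex.I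
        - (σ : ℂ) ^ 2 / ((z + (a : ℂ) * Complex.I + w) / 2) = z) := by
  set D : ℂ := (z + (a : ℂ) * Complex.I) ^ 2 + 4 * (σ : ℂ) ^ 2 with hD
  have hDim : D.im = 2 * z.re * (z.im + a) := by
    simp [hD, pow_two, Complex.add_im, Complex.add_re, Complex.mul_im, Complex.mul_re]
    ring
  have hDre : D.re = z.re ^ 2 - (z.im + a) ^ 2 + 4 * σ ^ 2 := by
    simp [hD, pow_two, Complex.add_im, Complex.add_re, Complex.mul_im, Complex.mul_re]
  have part1 : ¬ (D.im = 0 ∧ 0 ≤ D.re) := by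
    rintro ⟨h1, h2⟩
    rw [hDim] at h1
    rw [hDre] at h2
    have hza : 0 < z.im + a := by linarith
    have hre : z.re = 0 := by
      rcases mul_eq_zero.mp h1 with h | h
      · rcases mul_eq_zero.mp h with h | h
        · norm_num at h
        · exact h
      · linarith
    rw [hre] at h2
    nlinarith
  -- existence of square root with positive imaginary part
  have hsq : ∃ w : ℂ, 0 < w.im ∧ w ^ 2 = D := by
    obtain ⟨w, hw⟩ : ∃ w : ℂ, w ^ 2 = D :=
      ⟨D ^ (((2 : ℕ) : ℂ)⁻¹), Complex.cpow_nat_inv_pow D two_ne_zero⟩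
    have him : w.im ≠ 0 := by
      intro h0
      apply part1
      constructor
      · rw [← hw]; simp [pow_two, Complex.mul_im, h0]
      · rw [← hw]; simp [pow_two, Complex.mul_re, h0]
        nlinarith [mul_self_nonneg w.re]
    rcases him.lt_or_gt with h | h
    · exact ⟨-w, by simpa using h, by rw [neg_pow]; simpa using hw⟩
    · exact ⟨w, h, hw⟩
  refine ⟨part1, ?_, ?_⟩
  · obtain ⟨w, hwim, hw⟩ := hsq
    refine ⟨w, ⟨hwim, hw⟩, ?_⟩
    rintro v ⟨hvim, hv⟩
    have h : (v - w) * (v + w) = 0 := by ring_nf; rw [hv, hw]; ring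
    rcases mul_eq_zero.mp h with h | h
    · exact sub_eq_zero.mp h
    · exfalso
      have hvw : v = -w := eq_neg_of_add_eq_zero_left h
      rw [hvw] at hvim
      simp at hvim
      linarith
  · intro w hwim hw
    have hFim : 0 < ((z + (a : ℂ) * Complex.I + w) / 2).im := by
      simp [Complex.div_im, Complex.add_im]
      linarith
    have hF0 : (z + (a : ℂ) * Complex.I + w) / 2 ≠ 0 := by
      intro h
      rw [h] at hFim
      simp at hFim
    refine ⟨hFim, hF0, ?_⟩
    have hne : z + (a : ℂ) * Complex.I + w ≠ 0 := fun h => hF0 (by rw [h]; simp)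
    have hw' : w ^ 2 = (z + (a : ℂ) * Complex.I) ^ 2 + 4 * (σ : ℂ) ^ 2 := by rw [hw]
    have key : ((z + (a : ℂ) * Complex.I + w) / 2) * ((z + (a : ℂ) * Complex.I + w) / 2 - (z + (a : ℂ) * Complex.I)) = (σ : ℂ) ^ 2 := by
      linear_combination (1 / 4 : ℂ) * hw'
    have hdiv : (σ : ℂ) ^ 2 / ((z + (a : ℂ) * Complex.I + w) / 2)
        = (z + (a : ℂ) * Complex.I + w) / 2 - (z + (a : ℂ) * Complex.I) := by
      rw [eq_comm, eq_div_iff hF0]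
      linear_combination key
    rw [hdiv]
    ring
end

section
/- Let 0 < b < 1/8. Then ∫_{[−2√b, 2√b]} max(0, √(4b − x²)/(2b) − 2√2) / (π x²) dx = ∞; that is, the negative part of the function x ↦ (2√2 − √(4b − x²)/(2b))/(π x²) is not Lebesgue integrable on [−2√b, 2√b]. -/
open MeasureTheory
open scoped ENNReal

lemma aux_lintegral_inv_sq_top (c δ : ℝ) (hc : 0 < c) (hδ : 0 < δ) :
    ∫⁻ x in Set.Ioc (0:ℝ) δ, ENNReal.ofReal (c / x ^ 2) = ⊤ := by
  by_contra h
  have hmeas : Measurable fun x : ℝ => c / x ^ 2 := by fun_prop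
  have hint : IntegrableOn (fun x : ℝ => c / x ^ 2) (Set.Ioc 0 δ) := by
    refine ⟨hmeas.aestronglyMeasurable, ?_⟩
    rw [hasFiniteIntegral_iff_ofReal (ae_of_all _ fun x => by positivity)]
    exact lt_top_iff_ne_top.2 h
  have hint' : IntegrableOn (fun x : ℝ => x ^ (-2 : ℝ)) (Set.Ioo 0 δ) := by
    have h2 : IntegrableOn (fun x : ℝ => c⁻¹ * (c / x ^ 2)) (Set.Ioo 0 δ) :=
      (hint.mono_set Set.Ioo_subset_Ioc_self).const_mul c⁻¹
    refine h2.congr_fun (fun x hx => ?_) measurableSet_Ioo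
    have hx0 : (0:ℝ) < x := hx.1
    rw [Real.rpow_neg hx0.le, show (2:ℝ) = ((2:ℕ):ℝ) by norm_num, Real.rpow_natCast]
    field_simp
  rw [intervalIntegral.integrableOn_Ioo_rpow_iff hδ] at hint'
  norm_num at hint'

/-- For `0 < b < 1/8` the negative part of the density
`x ↦ (2√2 − √(4b − x²)/(2b))/(π x²)` of the free quasi-Lévy measure of `ρ(FM_{0,b})`
is not Lebesgue integrable on `[−2√b, 2√b]`: its integral is infinite. -/
theorem free_quasi_levy_negative_part_infinite (b : ℝ) (hb : 0 < b) (hb' : b < 1 / 8) :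
    ∫⁻ x in Set.Icc (-(2 * Real.sqrt b)) (2 * Real.sqrt b),
      ENNReal.ofReal (max 0 (Real.sqrt (4 * b - x ^ 2) / (2 * b) - 2 * Real.sqrt 2)
        / (Real.pi * x ^ 2)) = ⊤ := by
  set δ := Real.sqrt (2 * b * (1 - 8 * b)) with hδdef
  set c := Real.sqrt (2 * b * (1 + 8 * b)) / (2 * b) - 2 * Real.sqrt 2 with hcdef
  have h8 : 0 < 1 - 8 * b := by linarith
  have hδpos : 0 < δ := Real.sqrt_pos.2 (by positivity)
  have hδsq : δ ^ 2 = 2 * b * (1 - 8 * b) := Real.sq_sqrt (by positivity)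
  have hcpos : 0 < c := by
    have h1 : Real.sqrt 2 * (4 * b) < Real.sqrt (2 * b * (1 + 8 * b)) := by
      refine (Real.lt_sqrt (by positivity)).2 ?_
      rw [mul_pow, Real.sq_sqrt (by norm_num : (0:ℝ) ≤ 2)]
      nlinarith
    rw [hcdef, sub_pos, lt_div_iff₀ (by positivity : (0:ℝ) < 2 * b)]
    calc 2 * Real.sqrt 2 * (2 * b) = Real.sqrt 2 * (4 * b) := by ring
      _ < _ := h1
  have hδle : δ ≤ 2 * Real.sqrt b := by
    rw [hδdef, show 2 * Real.sqrt b = Real.sqrt (4 * b) by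
      rw [show (4:ℝ) * b = 2 ^ 2 * b by ring, Real.sqrt_mul (by positivity),
        Real.sqrt_sq (by norm_num)]]
    exact Real.sqrt_le_sqrt (by nlinarith)
  have hsub : Set.Ioc (0:ℝ) δ ⊆ Set.Icc (-(2 * Real.sqrt b)) (2 * Real.sqrt b) := by
    intro x hx
    constructor
    · linarith [hx.1, Real.sqrt_nonneg b]
    · linarith [hx.2]
  have key : ∫⁻ x in Set.Ioc (0:ℝ) δ, ENNReal.ofReal ((c / Real.pi) / x ^ 2) = ⊤ :=
    aux_lintegral_inv_sq_top _ δ (by positivity) hδpos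
  rw [eq_top_iff, ← key]
  refine le_trans ?_ (lintegral_mono_set hsub)
  refine setLIntegral_mono' measurableSet_Ioc fun x hx => ?_
  apply ENNReal.ofReal_le_ofReal
  have hx0 : (0:ℝ) < x := hx.1
  have hxsq : x ^ 2 ≤ 2 * b * (1 - 8 * b) := by
    rw [← hδsq]; exact pow_le_pow_left₀ hx0.le hx.2 2
  have hge : c ≤ Real.sqrt (4 * b - x ^ 2) / (2 * b) - 2 * Real.sqrt 2 := by
    rw [hcdef, sub_le_sub_iff_right, div_le_div_iff_of_pos_right (by positivity)]
    exact Real.sqrt_le_sqrt (by nlinarith)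
  have hmax : c ≤ max 0 (Real.sqrt (4 * b - x ^ 2) / (2 * b) - 2 * Real.sqrt 2) :=
    le_max_of_le_right hge
  have hpi := Real.pi_pos
  rw [div_div]
  gcongr
end

section
/- Let 0 < a < 1. There is no Borel probability measure μ on ℝ such that the functions x, x², x³, x⁴ are all μ-integrable and ∫ x dμ = a, ∫ x² dμ = a, ∫ x³ dμ = a, and ∫ x⁴ dμ = a − a² + 2a³ − a⁴. -/
open MeasureTheory

/-- For `0 < a < 1` there is no probability measure on ℝ whose first four moments are
`a, a, a, a − a² + 2a³ − a⁴`. -/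
theorem no_probability_measure_with_bernoulli_free_moments (a : ℝ) (ha : 0 < a) (ha' : a < 1) :
    ¬ ∃ μ : Measure ℝ, IsProbabilityMeasure μ ∧
      Integrable (fun x : ℝ => x) μ ∧
      Integrable (fun x : ℝ => x ^ 2) μ ∧
      Integrable (fun x : ℝ => x ^ 3) μ ∧
      Integrable (fun x : ℝ => x ^ 4) μ ∧
      (∫ x, x ∂μ) = a ∧
      (∫ x, x ^ 2 ∂μ) = a ∧
      (∫ x, x ^ 3 ∂μ) = a ∧
      (∫ x, x ^ 4 ∂μ) = a - a ^ 2 + 2 * a ^ 3 - a ^ 4 := by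
  rintro ⟨μ, hμ, h1, h2, h3, h4, m1, m2, m3, m4⟩
  have hval : (∫ x, (x ^ 4 - 2 * x ^ 3 + x ^ 2) ∂μ)
      = (a - a ^ 2 + 2 * a ^ 3 - a ^ 4) - 2 * a + a := by
    rw [integral_add (show Integrable (fun x : ℝ => x ^ 4 - 2 * x ^ 3) μ from h4.sub (h3.const_mul 2)) h2]
    rw [integral_sub h4 (h3.const_mul 2), MeasureTheory.integral_const_mul, m4, m3, m2]
  have hnn : 0 ≤ ∫ x, (x ^ 4 - 2 * x ^ 3 + x ^ 2) ∂μ :=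
    integral_nonneg fun x => show (0:ℝ) ≤ x ^ 4 - 2 * x ^ 3 + x ^ 2 by nlinarith [sq_nonneg (x ^ 2 - x)]
  have hpos : 0 < a * (1 - a) := mul_pos ha (by linarith)
  nlinarith [sq_nonneg (a * (1 - a))]
end

section
/- For every c > 0 and every z ∈ ℝ, one has ∫_ℝ (1 − cos(zx)) · c/(π x²) dx = c·|z| (the integrand, extended by the value c z²/(2π) at x = 0, being Lebesgue integrable on ℝ). -/
open MeasureTheory

open Real Filter Set


lemma hasDerivAt_expz (t x : ℝ) :
    HasDerivAt (fun y => Real.exp (-(t * y))) (-(t * Real.exp (-(t * x)))) x := by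
  have h := (((hasDerivAt_id x).const_mul t).neg).exp
  simpa [mul_comm] using h

-- antiderivative for (1 - cos x) * exp (-(t*x))
lemma hasDerivAt_G1 (t : ℝ) (ht : 0 < t) (x : ℝ) :
    HasDerivAt (fun y => -(Real.exp (-(t * y)) * ((t^2+1) + t * Real.sin y - t^2 * Real.cos y))
        / (t * (t^2+1)))
      ((1 - Real.cos x) * Real.exp (-(t * x))) x := by
  have hP : HasDerivAt (fun y => (t^2+1) + t * Real.sin y - t^2 * Real.cos y)
      (t * Real.cos x + t^2 * Real.sin x) x := by
    have := (((Real.hasDerivAt_sin x).const_mul t).const_add ((t:ℝ)^2+1)).sub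
      ((Real.hasDerivAt_cos x).const_mul (t^2))
    exact this.congr_deriv (by ring)
  have h := (((hasDerivAt_expz t x).mul hP).neg).div_const (t * (t^2+1))
  refine h.congr_deriv ?_
  have ht1 : (t:ℝ)^2 + 1 ≠ 0 := by positivity
  field_simp
  ring

-- antiderivative for t * exp (-(t*a)) (variable t)
lemma hasDerivAt_G2 (a : ℝ) (ha : 0 < a) (t : ℝ) :
    HasDerivAt (fun s => -(Real.exp (-(s * a)) * (s * a + 1)) / a ^ 2)
      (t * Real.exp (-(t * a))) t := by
  have he : HasDerivAt (fun s : ℝ => Real.exp (-(s * a))) (-(a * Real.exp (-(t * a)))) t := by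
    have := (((hasDerivAt_id t).mul_const a).neg).exp
    simpa [mul_comm] using this
  have hP : HasDerivAt (fun s : ℝ => s * a + 1) a t := by
    simpa using (hasDerivAt_id t).mul_const a |>.add_const 1
  have h := ((he.mul hP).neg).div_const (a ^ 2)
  refine h.congr_deriv ?_
  field_simp
  ring

lemma tendsto_expz (t : ℝ) (ht : 0 < t) :
    Tendsto (fun x => Real.exp (-(t * x))) atTop (nhds 0) := by
  have h1 : Tendsto (fun x : ℝ => t * x) atTop atTop :=
    Tendsto.const_mul_atTop ht tendsto_id
  simpa [Function.comp_def] using Real.tendsto_exp_neg_atTop_nhds_zero.comp h1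

lemma tendsto_G1 (t : ℝ) (ht : 0 < t) :
    Tendsto (fun y => -(Real.exp (-(t * y)) * ((t^2+1) + t * Real.sin y - t^2 * Real.cos y))
        / (t * (t^2+1))) atTop (nhds 0) := by
  apply tendsto_zero_iff_norm_tendsto_zero.2
  apply squeeze_zero (g := fun y => Real.exp (-(t * y)) * (((t^2+1) + t + t^2) / (t * (t^2+1))))
    (fun x => norm_nonneg _)
  · intro x
    have hD : (0:ℝ) < t * (t^2+1) := by positivity
    rw [norm_eq_abs, abs_div, abs_neg, abs_mul, abs_of_pos (Real.exp_pos _), abs_of_pos hD,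
      div_le_iff₀ hD, mul_assoc, div_mul_cancel₀ _ (ne_of_gt hD)]
    gcongr
    calc |(t^2+1) + t * Real.sin x - t^2 * Real.cos x|
        ≤ |(t^2+1) + t * Real.sin x| + |t^2 * Real.cos x| := abs_sub _ _
      _ ≤ |(t:ℝ)^2+1| + |t * Real.sin x| + |t^2 * Real.cos x| := by
          gcongr; exact abs_add_le _ _
      _ ≤ ((t:ℝ)^2+1) + t + t^2 := by
          rw [abs_of_pos (by positivity : (0:ℝ) < t^2+1), abs_mul, abs_mul]
          gcongr
          · rw [abs_of_pos ht]
            nlinarith [abs_sin_le_one x, abs_nonneg (Real.sin x), ht.le]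
          · rw [abs_of_nonneg (sq_nonneg t)]
            nlinarith [abs_cos_le_one x, abs_nonneg (Real.cos x), sq_nonneg t]
  · simpa using (tendsto_expz t ht).mul_const (((t^2+1) + t + t^2) / (t * (t^2+1)))

lemma integral_one_sub_cos_exp (t : ℝ) (ht : 0 < t) :
    (∫ x in Ioi (0:ℝ), (1 - Real.cos x) * Real.exp (-(t * x))) = 1 / (t * (t^2+1)) ∧
    IntegrableOn (fun x => (1 - Real.cos x) * Real.exp (-(t * x))) (Ioi (0:ℝ)) := by
  have hderiv : ∀ x ∈ Ici (0:ℝ), HasDerivAt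
      (fun y => -(Real.exp (-(t * y)) * ((t^2+1) + t * Real.sin y - t^2 * Real.cos y))
        / (t * (t^2+1))) ((1 - Real.cos x) * Real.exp (-(t * x))) x :=
    fun x _ => hasDerivAt_G1 t ht x
  have hpos : ∀ x ∈ Ioi (0:ℝ), 0 ≤ (1 - Real.cos x) * Real.exp (-(t * x)) := by
    intro x _
    have h1 := Real.cos_le_one x
    have h2 := Real.exp_pos (-(t * x))
    nlinarith
  refine ⟨?_, integrableOn_Ioi_deriv_of_nonneg' hderiv hpos (tendsto_G1 t ht)⟩
  rw [integral_Ioi_of_hasDerivAt_of_nonneg' hderiv hpos (tendsto_G1 t ht)]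
  have ht1 : (t:ℝ)^2 + 1 ≠ 0 := by positivity
  simp only [mul_zero, neg_zero, Real.exp_zero, Real.sin_zero, Real.cos_zero]
  field_simp
  try ring

lemma tendsto_G2 (a : ℝ) (ha : 0 < a) :
    Tendsto (fun s => -(Real.exp (-(s * a)) * (s * a + 1)) / a ^ 2) atTop (nhds 0) := by
  have h1 : Tendsto (fun s : ℝ => s * a) atTop atTop :=
    Tendsto.atTop_mul_const ha tendsto_id
  have h2 : Tendsto (fun u : ℝ => u * Real.exp (-u) + Real.exp (-u)) atTop (nhds 0) := by
    have := Real.tendsto_pow_mul_exp_neg_atTop_nhds_zero 1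
    simpa using this.add Real.tendsto_exp_neg_atTop_nhds_zero
  have h3 : Tendsto (fun s : ℝ => Real.exp (-(s * a)) * (s * a + 1)) atTop (nhds 0) := by
    have := h2.comp h1
    have e : ((fun u : ℝ => u * Real.exp (-u) + Real.exp (-u)) ∘ fun s : ℝ => s * a)
        = fun s : ℝ => Real.exp (-(s * a)) * (s * a + 1) := by
      funext s; simp [Function.comp]; ring
    rwa [e] at this
  simpa using (h3.neg.div_const (a ^ 2))

lemma integral_t_exp (a : ℝ) (ha : 0 < a) :
    (∫ t in Ioi (0:ℝ), t * Real.exp (-(t * a))) = 1 / a ^ 2 ∧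
    IntegrableOn (fun t => t * Real.exp (-(t * a))) (Ioi (0:ℝ)) := by
  have hderiv : ∀ t ∈ Ici (0:ℝ), HasDerivAt
      (fun s => -(Real.exp (-(s * a)) * (s * a + 1)) / a ^ 2) (t * Real.exp (-(t * a))) t :=
    fun t _ => hasDerivAt_G2 a ha t
  have hpos : ∀ t ∈ Ioi (0:ℝ), 0 ≤ t * Real.exp (-(t * a)) := by
    intro t htt
    have : (0:ℝ) < t := htt
    positivity
  refine ⟨?_, integrableOn_Ioi_deriv_of_nonneg' hderiv hpos (tendsto_G2 a ha)⟩
  rw [integral_Ioi_of_hasDerivAt_of_nonneg' hderiv hpos (tendsto_G2 a ha)]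
  simp [Real.exp_zero]
  ring

lemma integrable_comp_abs' {f : ℝ → ℝ} (hf : IntegrableOn f (Ioi 0)) :
    Integrable (fun x => f |x|) := by
  have hf' : IntegrableOn (fun x => f |x|) (Ioi 0) :=
    hf.congr_fun (fun x hx => by rw [abs_of_pos hx]) measurableSet_Ioi
  have int_Iic : IntegrableOn (fun x => f |x|) (Iic 0) := by
    rw [← Measure.map_neg_eq_self (volume : Measure ℝ)]
    have m : MeasurableEmbedding fun x : ℝ => -x := (Homeomorph.neg ℝ).measurableEmbedding
    rw [m.integrableOn_map_iff]
    simp_rw [Function.comp_def, abs_neg, neg_preimage, neg_Iic, neg_zero]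
    exact (integrableOn_Ici_iff_integrableOn_Ioi).mpr hf'
  have h := int_Iic.union hf'
  rwa [Iic_union_Ioi, integrableOn_univ] at h

lemma lint_inner_t (x : ℝ) (hx : x ≠ 0) :
    ∫⁻ t in Ioi (0:ℝ), ENNReal.ofReal ((1 - Real.cos x) * (t * Real.exp (-(t * |x|))))
      = ENNReal.ofReal ((1 - Real.cos x) / x ^ 2) := by
  have ha : (0:ℝ) < |x| := abs_pos.2 hx
  obtain ⟨hval, hint⟩ := integral_t_exp |x| ha
  have hcc : (0:ℝ) ≤ 1 - Real.cos x := by nlinarith [Real.cos_le_one x]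
  have hI : Integrable (fun t => (1 - Real.cos x) * (t * Real.exp (-(t * |x|))))
      (volume.restrict (Ioi 0)) := hint.const_mul _
  have hnn : 0 ≤ᵐ[volume.restrict (Ioi (0:ℝ))]
      fun t => (1 - Real.cos x) * (t * Real.exp (-(t * |x|))) := by
    filter_upwards [ae_restrict_mem measurableSet_Ioi] with t ht
    have : (0:ℝ) < t := ht
    positivity
  rw [← ofReal_integral_eq_lintegral_ofReal hI hnn, integral_const_mul, hval]
  congr 1
  rw [sq_abs] at *
  field_simp

lemma lint_inner_x (t : ℝ) (ht : 0 < t) :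
    ∫⁻ x : ℝ, ENNReal.ofReal ((1 - Real.cos x) * (t * Real.exp (-(t * |x|))))
      = ENNReal.ofReal (2 * (1 + t ^ 2)⁻¹) := by
  obtain ⟨hval, hint⟩ := integral_one_sub_cos_exp t ht
  set f : ℝ → ℝ := fun u => (1 - Real.cos u) * (t * Real.exp (-(t * u))) with hf
  have hfi : IntegrableOn f (Ioi 0) := by
    have h2 : IntegrableOn (fun x => t * ((1 - Real.cos x) * Real.exp (-(t * x)))) (Ioi 0) :=
      hint.const_mul t
    exact h2.congr_fun (fun u _ => by simp only [hf]; ring) measurableSet_Ioi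
  have hF : (fun x : ℝ => (1 - Real.cos x) * (t * Real.exp (-(t * |x|))))
      = fun x => f |x| := by
    funext x; simp [hf, Real.cos_abs]
  have hI : Integrable (fun x : ℝ => (1 - Real.cos x) * (t * Real.exp (-(t * |x|)))) := by
    rw [hF]; exact integrable_comp_abs' hfi
  have hnn : 0 ≤ᵐ[(volume : Measure ℝ)]
      fun x => (1 - Real.cos x) * (t * Real.exp (-(t * |x|))) := by
    filter_upwards with x
    simp only [Pi.zero_apply]
    have h1 : (0:ℝ) ≤ 1 - Real.cos x := by nlinarith [Real.cos_le_one x]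
    positivity
  rw [← ofReal_integral_eq_lintegral_ofReal hI hnn]
  congr 1
  rw [hF, integral_comp_abs (f := f)]
  have : ∫ u in Ioi (0:ℝ), f u = t * (1 / (t * (t^2+1))) := by
    rw [hf, ← hval, ← integral_const_mul]
    refine setIntegral_congr_fun measurableSet_Ioi fun u _ => ?_
    ring
  rw [this]
  have ht' : t ≠ 0 := ne_of_gt ht
  field_simp
  ring

lemma lint_main : ∫⁻ x : ℝ, ENNReal.ofReal ((1 - Real.cos x) / x ^ 2) = ENNReal.ofReal π := by
  have hmeas : AEMeasurable (Function.uncurry fun x t : ℝ =>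
      ENNReal.ofReal ((1 - Real.cos x) * (t * Real.exp (-(t * |x|)))))
      ((volume : Measure ℝ).prod (volume.restrict (Ioi 0))) := by
    apply Continuous.aemeasurable
    apply ENNReal.continuous_ofReal.comp
    fun_prop
  have step1 : ∫⁻ x : ℝ, ENNReal.ofReal ((1 - Real.cos x) / x ^ 2)
      = ∫⁻ x : ℝ, ∫⁻ t in Ioi (0:ℝ),
          ENNReal.ofReal ((1 - Real.cos x) * (t * Real.exp (-(t * |x|)))) := by
    apply lintegral_congr_ae
    filter_upwards [compl_mem_ae_iff.2 (volume_singleton (a := (0:ℝ)))] with x hx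
    exact (lint_inner_t x hx).symm
  rw [step1, lintegral_lintegral_swap hmeas]
  have step3 : ∫⁻ t in Ioi (0:ℝ), ∫⁻ x : ℝ,
      ENNReal.ofReal ((1 - Real.cos x) * (t * Real.exp (-(t * |x|))))
      = ∫⁻ t in Ioi (0:ℝ), ENNReal.ofReal (2 * (1 + t ^ 2)⁻¹) := by
    apply setLIntegral_congr_fun measurableSet_Ioi
    intro t ht
    exact lint_inner_x t ht
  rw [step3]
  have hI : Integrable (fun t : ℝ => 2 * (1 + t ^ 2)⁻¹) (volume.restrict (Ioi 0)) :=
    (integrable_inv_one_add_sq.const_mul 2).integrableOn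
  have hnn : 0 ≤ᵐ[volume.restrict (Ioi (0:ℝ))] fun t => 2 * (1 + t ^ 2)⁻¹ := by
    filter_upwards with t
    simp only [Pi.zero_apply]
    positivity
  rw [← ofReal_integral_eq_lintegral_ofReal hI hnn, integral_const_mul,
    integral_Ioi_inv_one_add_sq]
  congr 1
  simp
  ring

lemma integral_one_sub_cos_div_sq : ∫ x : ℝ, (1 - Real.cos x) / x ^ 2 = π := by
  rw [integral_eq_lintegral_of_nonneg_ae, lint_main, ENNReal.toReal_ofReal Real.pi_pos.le]
  · filter_upwards with x
    simp only [Pi.zero_apply]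
    have h1 : (0:ℝ) ≤ 1 - Real.cos x := by nlinarith [Real.cos_le_one x]
    positivity
  · apply Measurable.aestronglyMeasurable
    measurability

/-- The Lévy integral of the Cauchy distribution:
`∫_ℝ (1 − cos(zx)) · c/(π x²) dx = c·|z|` for every `c > 0` and `z ∈ ℝ`. -/
theorem cauchy_levy_integral (c : ℝ) (hc : 0 < c) (z : ℝ) :
    ∫ x : ℝ, (1 - Real.cos (z * x)) * c / (Real.pi * x ^ 2) = c * |z| := by
  rcases eq_or_ne z 0 with hz | hz
  · simp [hz]
  · set g : ℝ → ℝ := fun u => (1 - Real.cos u) * c / (Real.pi * u ^ 2) with hg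
    have key : ∀ x : ℝ, (1 - Real.cos (z * x)) * c / (Real.pi * x ^ 2) = z ^ 2 * g (z * x) := by
      intro x
      rcases eq_or_ne x 0 with h | h
      · simp [h, hg]
      · simp only [hg]
        rw [mul_pow]
        have hπ : Real.pi ≠ 0 := Real.pi_ne_zero
        field_simp
    simp_rw [key]
    rw [integral_const_mul, MeasureTheory.Measure.integral_comp_mul_left g z]
    have hK : ∫ u : ℝ, g u = c := by
      have : ∀ u : ℝ, g u = (c / Real.pi) * ((1 - Real.cos u) / u ^ 2) := by
        intro u
        simp only [hg]
        rw [div_eq_mul_inv, div_eq_mul_inv, div_eq_mul_inv, mul_inv]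
        ring
      simp_rw [this]
      rw [integral_const_mul, integral_one_sub_cos_div_sq]
      field_simp
    rw [hK, smul_eq_mul]
    rw [abs_inv]
    have : |z| ≠ 0 := abs_ne_zero.2 hz
    rw [← sq_abs]
    field_simp
end

section
/- Let p, λ, c > 0 and define h(p) = √(2p(4p+1)) if 0 < p ≤ 1/4 and h(p) = 2p + √p if p > 1/4. If c ≥ λ·h(p), then for every z ∈ ℝ one has 2pλ² cos(λz) + (−c + 2pλ sin(λz))² ≥ 0. -/
/-- For `p, l, c > 0` with `c ≥ l·h(p)`, where `h(p) = √(2p(4p+1))` for `p ≤ 1/4` and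
`h(p) = 2p + √p` for `p > 1/4`, one has
`2pl² cos(lz) + (−c + 2pl sin(lz))² ≥ 0` for all `z ∈ ℝ`. -/
theorem A_nonneg_two_point_levy (p l c : ℝ) (hp : 0 < p) (hl : 0 < l) (hc : 0 < c)
    (h : l * (if p ≤ 1 / 4 then Real.sqrt (2 * p * (4 * p + 1)) else 2 * p + Real.sqrt p)
      ≤ c) :
    ∀ z : ℝ,
      0 ≤ 2 * p * l ^ 2 * Real.cos (l * z) + (-c + 2 * p * l * Real.sin (l * z)) ^ 2 := by
  intro z
  set s := Real.sin (l * z) with hs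
  set cs := Real.cos (l * z) with hcs
  have h1 : s ^ 2 + cs ^ 2 = 1 := Real.sin_sq_add_cos_sq _
  have hs1 : s ≤ 1 := Real.sin_le_one _
  have hs2 : -1 ≤ s := Real.neg_one_le_sin _
  -- cos ≥ s²/2 - 1, from (cs+1)² ≥ 0 and s² = 1 - cs²
  have key : 2 * p * l ^ 2 * (s ^ 2 / 2 - 1) ≤ 2 * p * l ^ 2 * cs := by
    have h2 : 0 ≤ (cs + 1) ^ 2 := sq_nonneg _
    have h3 : 0 < p * l ^ 2 := mul_pos hp (pow_pos hl 2)
    nlinarith [mul_nonneg h3.le h2]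
  have main : 0 ≤ 2 * p * l ^ 2 * (s ^ 2 / 2 - 1) + (-c + 2 * p * l * s) ^ 2 := by
    by_cases hp4 : p ≤ 1 / 4
    · rw [if_pos hp4] at h
      have hx : (0:ℝ) ≤ 2 * p * (4 * p + 1) := by nlinarith
      have hsq : Real.sqrt (2 * p * (4 * p + 1)) ^ 2 = 2 * p * (4 * p + 1) :=
        Real.sq_sqrt hx
      have hsqnn : 0 ≤ Real.sqrt (2 * p * (4 * p + 1)) := Real.sqrt_nonneg _
      have hc2 : 2 * p * (4 * p + 1) * l ^ 2 ≤ c ^ 2 := by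
        nlinarith [mul_nonneg hsqnn hl.le]
      have ha : 0 < p * l ^ 2 * (1 + 4 * p) := by positivity
      nlinarith [sq_nonneg (p * l ^ 2 * (1 + 4 * p) * s - 2 * p * l * c),
        mul_nonneg (mul_pos hp (pow_pos hl 2)).le
          (by linarith : (0:ℝ) ≤ c ^ 2 - 2 * p * (4 * p + 1) * l ^ 2), ha]
    · rw [if_neg hp4] at h
      push_neg at hp4
      have hsp : Real.sqrt p ^ 2 = p := Real.sq_sqrt hp.le
      have hsp2 : (1:ℝ) / 2 ≤ Real.sqrt p := by
        have : Real.sqrt (1 / 4) ≤ Real.sqrt p := Real.sqrt_le_sqrt (by linarith)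
        rwa [show (1:ℝ)/4 = (1/2)^2 by norm_num, Real.sqrt_sq (by norm_num)] at this
      have hA : 0 ≤ 1 - s := by linarith
      have hB : 0 ≤ 4 * p * l * c - p * l ^ 2 * (1 + 4 * p) * (1 + s) := by
        have hc3 : l * (2 * p + 1 / 2) ≤ c := by nlinarith
        have h4 : 0 ≤ 4 * p * l * (c - l * (2 * p + 1 / 2)) := by
          have := mul_pos hp hl
          nlinarith
        have h5 : 0 ≤ p * l ^ 2 * (1 + 4 * p) * (1 - s) := by positivity
        nlinarith [h4, h5]
      have hC : 0 ≤ (c - 2 * p * l) ^ 2 - p * l ^ 2 := by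
        have hcl : l * Real.sqrt p ≤ c - 2 * p * l := by nlinarith
        nlinarith [mul_nonneg hl.le (Real.sqrt_nonneg p)]
      have hM := mul_nonneg hA hB
      linarith [hM, hC]
  linarith [main, key]
end
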